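/- arXiv:2509.24029 — 12 statements merged into one kernel-verified Lean document; each statement's English description precedes it below -/
import Mathlib

section
/- For every integer n ≥ 3 there exists exactly one configuration of n charges at equilibrium on the needle [0,1]; that is, there is a unique strictly increasing tuple x_1 < x_2 < ⋯ < x_n of real numbers with x_1 = 0 and x_n = 1 such that for every i with 2 ≤ i ≤ n−1, ∑_{j=1}^{i−1} 1/(x_i − x_j)² = ∑_{j=i+1}^{n} 1/(x_i − x_j)². -/
/-!
Existence: the Coulomb energy `∑_{j<i} 1 / (x_i - x_j)` is continuous on the compact set of
configurations pinned at `0` and `1` whose gaps are all at least `δ`, so it has a minimiser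
there. Every gap of a minimiser is at least the reciprocal of its energy, hence of the energy of
a fixed competitor; for small `δ` the gap constraints are therefore inactive, each interior
charge can be moved freely, and the vanishing partial derivative is the balance of forces.

Uniqueness is a maximum principle: if `x - y` attains a positive maximum at `i`, then `i` is
interior, and the charge `x_i` is farther from every charge on its left (strictly from the one
at `0`) and closer to every charge on its right than `y_i` is, so the forces on `x_i` cannot
balance if those on `y_i` do.
-/

/-- For `n ≥ 3`, `x : Fin n → ℝ` is a configuration of `n` charges at equilibrium on the
needle `[0,1]`: a strictly increasing tuple with `x 0 = 0`, `x (n-1) = 1` such that each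
interior charge feels balanced forces. -/
def needleEquilibrium (n : ℕ) (x : Fin n → ℝ) : Prop :=
  StrictMono x ∧ (∀ i : Fin n, i.val = 0 → x i = 0) ∧
    (∀ i : Fin n, i.val = n - 1 → x i = 1) ∧
    ∀ i : Fin n, 1 ≤ i.val → i.val ≤ n - 2 →
      (∑ j ∈ Finset.univ.filter (fun j => j < i), 1 / (x i - x j) ^ 2) =
        ∑ j ∈ Finset.univ.filter (fun j => i < j), 1 / (x i - x j) ^ 2

open Finset Filter Topology Function

section Coulomb

variable {ι : Type*} [Fintype ι] [LinearOrder ι]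

noncomputable def coulombEnergy (x : ι → ℝ) : ℝ :=
  ∑ i, ∑ j ∈ univ.filter (· < i), (x i - x j)⁻¹

noncomputable def leftForce (x : ι → ℝ) (i : ι) : ℝ :=
  ∑ j ∈ univ.filter (· < i), 1 / (x i - x j) ^ 2

noncomputable def rightForce (x : ι → ℝ) (i : ι) : ℝ :=
  ∑ j ∈ univ.filter (i < ·), 1 / (x i - x j) ^ 2

theorem inv_sub_le_coulombEnergy {x : ι → ℝ} (hx : Monotone x) {i j : ι} (hji : j < i) :
    (x i - x j)⁻¹ ≤ coulombEnergy x := by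
  have hnonneg (a : ι) : ∀ b ∈ univ.filter (· < a), 0 ≤ (x a - x b)⁻¹ := fun b hb =>
    inv_nonneg.2 (sub_nonneg.2 (hx (mem_filter.1 hb).2.le))
  calc (x i - x j)⁻¹ ≤ ∑ j ∈ univ.filter (· < i), (x i - x j)⁻¹ :=
        single_le_sum (hnonneg i) (mem_filter.2 ⟨mem_univ j, hji⟩)
    _ ≤ coulombEnergy x :=
        single_le_sum (fun a _ => sum_nonneg (hnonneg a)) (mem_univ i)

theorem continuousOn_coulombEnergy : ContinuousOn (coulombEnergy (ι := ι)) {x | Injective x} :=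
  continuousOn_finsetSum _ fun i _ => continuousOn_finsetSum _ fun j hj =>
    ((continuous_apply i).sub (continuous_apply j)).continuousOn.inv₀ fun _ hx =>
      sub_ne_zero.2 (hx.ne (mem_filter.1 hj).2.ne')

theorem hasDerivAt_coulombEnergy_update {x : ι → ℝ} (hx : Injective x) (k : ι) :
    HasDerivAt (fun t => coulombEnergy (update x k t)) (rightForce x k - leftForce x k) (x k) := by
  have hcoord (i : ι) : HasDerivAt (fun t => update x k t i) ((Pi.single k 1 : ι → ℝ) i) (x k) :=
    hasDerivAt_pi.1 (hasDerivAt_update x k (x k)) i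
  have hsum : HasDerivAt (fun t => coulombEnergy (update x k t))
      (∑ i, ∑ j ∈ univ.filter (· < i),
        -((Pi.single k 1 : ι → ℝ) i - (Pi.single k 1 : ι → ℝ) j) / (x i - x j) ^ 2) (x k) := by
    refine HasDerivAt.fun_sum fun i _ => HasDerivAt.fun_sum fun j hj => ?_
    have hne : update x k (x k) i - update x k (x k) j ≠ 0 := by
      simpa [sub_eq_zero] using hx.ne (mem_filter.1 hj).2.ne'
    simpa using ((hcoord i).fun_sub (hcoord j)).fun_inv hne
  convert hsum using 1
  simp [leftForce, rightForce, sub_div, Pi.single_apply, ite_div, sum_ite_eq', sum_filter,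
    sub_sq_comm]

theorem leftForce_lt_leftForce {x y : ι → ℝ} {i j₀ : ι} (hy : StrictMono y)
    (hmax : ∀ j, x j - y j ≤ x i - y i) (hj₀ : j₀ < i) (hlt : x j₀ - y j₀ < x i - y i) :
    leftForce x i < leftForce y i := by
  refine sum_lt_sum (fun j hj => ?_) ⟨j₀, by simpa using hj₀, ?_⟩
  · have hpos : 0 < y i - y j := sub_pos.2 (hy (mem_filter.1 hj).2)
    gcongr 1 / ?_ ^ 2
    linarith [hmax j]
  · have hpos : 0 < y i - y j₀ := sub_pos.2 (hy hj₀)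
    gcongr 1 / ?_ ^ 2
    linarith

theorem rightForce_le_rightForce {x y : ι → ℝ} {i : ι} (hx : StrictMono x)
    (hmax : ∀ j, x j - y j ≤ x i - y i) : rightForce y i ≤ rightForce x i := by
  refine sum_le_sum fun j hj => ?_
  have hpos : 0 < x j - x i := sub_pos.2 (hx (mem_filter.1 hj).2)
  rw [sub_sq_comm (y i), sub_sq_comm (x i)]
  gcongr 1 / ?_ ^ 2
  linarith [hmax j]

end Coulomb

section Needle

variable {n : ℕ} {δ : ℝ}

def separatedNeedleConfigs (n : ℕ) (δ : ℝ) : Set (Fin n → ℝ) :=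
  {x | (∀ i : Fin n, i.val = 0 → x i = 0) ∧ (∀ i : Fin n, i.val = n - 1 → x i = 1) ∧
    ∀ i j : Fin n, i < j → δ ≤ x j - x i}

theorem separatedNeedleConfigs_anti : Antitone (separatedNeedleConfigs n) :=
  fun _ _ hδg _ hx => ⟨hx.1, hx.2.1, fun i j hij => hδg.trans (hx.2.2 i j hij)⟩

theorem monotone_of_mem_separatedNeedleConfigs (hδ : 0 ≤ δ) {x : Fin n → ℝ}
    (hx : x ∈ separatedNeedleConfigs n δ) : Monotone x := by
  intro i j hij
  rcases hij.eq_or_lt with rfl | hlt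
  · exact le_rfl
  · linarith [hx.2.2 i j hlt]

theorem strictMono_of_mem_separatedNeedleConfigs (hδ : 0 < δ) {x : Fin n → ℝ}
    (hx : x ∈ separatedNeedleConfigs n δ) : StrictMono x :=
  fun i j hij => by linarith [hx.2.2 i j hij]

theorem isClosed_separatedNeedleConfigs : IsClosed (separatedNeedleConfigs n δ) := by
  simp only [separatedNeedleConfigs, Set.ofPred_and, Set.ofPred_forall]
  refine .inter ?_ (.inter ?_ ?_) <;>
    refine isClosed_iInter fun i => isClosed_iInter fun j => ?_
  · exact isClosed_eq (continuous_apply i) continuous_const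
  · exact isClosed_eq (continuous_apply i) continuous_const
  · exact isClosed_iInter fun _ => isClosed_le continuous_const (by fun_prop)

theorem separatedNeedleConfigs_subset_Icc (hδ : 0 ≤ δ) :
    separatedNeedleConfigs n δ ⊆ Set.Icc 0 1 := fun x hx => by
  have hmono := monotone_of_mem_separatedNeedleConfigs hδ hx
  refine ⟨fun i => ?_, fun i => ?_⟩
  · calc (0 : Fin n → ℝ) i = x ⟨0, i.pos⟩ := (hx.1 _ rfl).symm
      _ ≤ x i := hmono (Nat.zero_le _)
  · calc x i ≤ x ⟨n - 1, Nat.sub_one_lt_of_lt i.isLt⟩ := hmono (Nat.le_sub_one_of_lt i.isLt)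
      _ = 1 := hx.2.1 _ rfl

theorem isCompact_separatedNeedleConfigs (hδ : 0 ≤ δ) :
    IsCompact (separatedNeedleConfigs n δ) :=
  isCompact_Icc.of_isClosed_subset isClosed_separatedNeedleConfigs
    (separatedNeedleConfigs_subset_Icc hδ)

theorem needleEquilibrium_of_isMinOn (hδ : 0 < δ) {z : Fin n → ℝ}
    (hz : z ∈ separatedNeedleConfigs n δ)
    (hmin : IsMinOn coulombEnergy (separatedNeedleConfigs n δ) z)
    (hgap : ∀ i j : Fin n, i < j → δ < z j - z i) : needleEquilibrium n z := by
  have hz_mono := strictMono_of_mem_separatedNeedleConfigs hδ hz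
  refine ⟨hz_mono, hz.1, hz.2.1, fun k hk₁ hk₂ => ?_⟩
  have hpinned (t : ℝ) : (∀ i : Fin n, i.val = 0 → update z k t i = 0) ∧
      (∀ i : Fin n, i.val = n - 1 → update z k t i = 1) :=
    ⟨fun i hi => by rw [update_of_ne (Fin.ne_of_val_ne (by omega))]; exact hz.1 i hi,
      fun i hi => by rw [update_of_ne (Fin.ne_of_val_ne (by omega))]; exact hz.2.1 i hi⟩
  have hnear : ∀ᶠ t in 𝓝 (z k), ∀ i j : Fin n, i < j → δ < update z k t j - update z k t i := by
    simp only [eventually_all]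
    intro i j hij
    exact continuousAt_const.eventually_lt (by fun_prop) (by simpa using hgap i j hij)
  have hloc : IsLocalMin (fun t => coulombEnergy (update z k t)) (z k) :=
    hnear.mono fun t ht => by
      simpa using hmin ⟨(hpinned t).1, (hpinned t).2, fun i j hij => (ht i j hij).le⟩
  exact (sub_eq_zero.1 (hloc.hasDerivAt_eq_zero
    (hasDerivAt_coulombEnergy_update hz_mono.injective k))).symm

theorem exists_needleEquilibrium_of_mem {g : ℝ} (hg : 0 < g) {x₀ : Fin n → ℝ}
    (hx₀ : x₀ ∈ separatedNeedleConfigs n g) : ∃ x, needleEquilibrium n x := by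
  set C := coulombEnergy x₀
  -- `C < δ⁻¹` will keep every gap of a minimiser strictly above `δ`.
  obtain ⟨δ, hδ, hδg, hCδ⟩ : ∃ δ, 0 < δ ∧ δ ≤ g ∧ C < δ⁻¹ := by
    refine ⟨min g (|C| + 1)⁻¹, by positivity, min_le_left _ _, ?_⟩
    calc C < |C| + 1 := by linarith [le_abs_self C]
      _ ≤ (min g (|C| + 1)⁻¹)⁻¹ :=
        (le_inv_comm₀ (by positivity) (by positivity)).2 (min_le_right _ _)
  obtain ⟨z, hz, hmin⟩ := (isCompact_separatedNeedleConfigs hδ.le).exists_isMinOn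
    ⟨x₀, separatedNeedleConfigs_anti hδg hx₀⟩
    (continuousOn_coulombEnergy.mono fun x hx =>
      (strictMono_of_mem_separatedNeedleConfigs hδ hx).injective)
  refine ⟨z, needleEquilibrium_of_isMinOn hδ hz hmin fun i j hij => ?_⟩
  have hpos : 0 < z j - z i := hδ.trans_le (hz.2.2 i j hij)
  refine (inv_lt_inv₀ hpos hδ).1 ?_
  calc (z j - z i)⁻¹ ≤ coulombEnergy z :=
        inv_sub_le_coulombEnergy (strictMono_of_mem_separatedNeedleConfigs hδ hz).monotone hij
    _ ≤ C := hmin (separatedNeedleConfigs_anti hδg hx₀)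
    _ < δ⁻¹ := hCδ

theorem equispaced_mem_separatedNeedleConfigs (hn : 2 ≤ n) :
    (fun i : Fin n => (i.val : ℝ) / (n - 1)) ∈ separatedNeedleConfigs n (1 / (n - 1)) := by
  have hn' : (1 : ℝ) < n := by exact_mod_cast hn
  refine ⟨fun i hi => by simp [hi], fun i hi => ?_, fun i j hij => ?_⟩
  · dsimp only
    rw [hi, Nat.cast_sub (by omega), Nat.cast_one, div_self (by linarith)]
  · have hij' : (i.val : ℝ) + 1 ≤ j.val := by exact_mod_cast hij
    rw [← sub_div]
    gcongr
    linarith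

theorem exists_needleEquilibrium (hn : 2 ≤ n) : ∃ x, needleEquilibrium n x := by
  have hn' : (1 : ℝ) < n := by exact_mod_cast hn
  exact exists_needleEquilibrium_of_mem (by simpa using hn')
    (equispaced_mem_separatedNeedleConfigs hn)

theorem needleEquilibrium.le {x y : Fin n → ℝ} (hx : needleEquilibrium n x)
    (hy : needleEquilibrium n y) : x ≤ y := by
  by_contra hxy
  obtain ⟨w, hw⟩ : ∃ w, y w < x w := by simpa [Pi.le_def] using hxy
  have : Nonempty (Fin n) := ⟨w⟩
  obtain ⟨i, hi⟩ := Finite.exists_max fun j => x j - y j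
  have hpos : 0 < x i - y i := by linarith [hi w]
  have hi₀ : i.val ≠ 0 := fun h => by linarith [hx.2.1 i h, hy.2.1 i h]
  have hi₁ : i.val ≠ n - 1 := fun h => by linarith [hx.2.2.1 i h, hy.2.2.1 i h]
  have hbal_x : leftForce x i = rightForce x i := hx.2.2.2 i (by omega) (by omega)
  have hbal_y : leftForce y i = rightForce y i := hy.2.2.2 i (by omega) (by omega)
  let j₀ : Fin n := ⟨0, w.pos⟩
  have hleft := leftForce_lt_leftForce (j₀ := j₀) hy.1 hi (Fin.lt_def.2 (Nat.pos_of_ne_zero hi₀))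
    (by simpa [j₀, hx.2.1 j₀ rfl, hy.2.1 j₀ rfl] using hpos)
  linarith [rightForce_le_rightForce hx.1 hi]

end Needle

/-- For every integer `n ≥ 3` there exists exactly one configuration of `n` charges at
equilibrium on the needle `[0,1]`. -/
theorem existsUnique_needle_equilibrium (n : ℕ) (hn : 3 ≤ n) :
    ∃! x : Fin n → ℝ, needleEquilibrium n x := by
  obtain ⟨x, hx⟩ := exists_needleEquilibrium (by omega : 2 ≤ n)
  exact ⟨x, hx, fun y hy => le_antisymm (hy.le hx) (hx.le hy)⟩
end

section
/- The function ω is strictly convex on U_{n−2}: for all A, B ∈ U_{n−2} with A ≠ B and all t ∈ (0,1), ω(tA + (1−t)B) < t·ω(A) + (1−t)·ω(B). -/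
/-- Extend a point `(a_2, …, a_{n-1}) ∈ ℝ^{n-2}` to a full configuration on the needle,
with `a_1 = 0` and `a_n = 1` (0-indexed: position `0` is `0`, position `n-1` is `1`). -/
def extCfg (n : ℕ) (a : Fin (n - 2) → ℝ) : Fin n → ℝ := fun i =>
  if h0 : i.val = 0 then 0
  else if h1 : i.val = n - 1 then 1
  else a ⟨i.val - 1, by have := i.isLt; omega⟩

/-- The open simplex `U_{n-2} = {0 < a_2 < ⋯ < a_{n-1} < 1} ⊆ ℝ^{n-2}`. -/
def needleU (n : ℕ) : Set (Fin (n - 2) → ℝ) :=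
  {a | StrictMono (extCfg n a)}

/-- The interaction energy `ω(a_2,…,a_{n-1}) = ∑_{1 ≤ j < k ≤ n} 1/(a_k - a_j)`
(with `a_1 = 0`, `a_n = 1`). -/
noncomputable def needleOmega (n : ℕ) (a : Fin (n - 2) → ℝ) : ℝ :=
  ∑ p ∈ Finset.univ.filter (fun p : Fin n × Fin n => p.1 < p.2),
    1 / (extCfg n a p.2 - extCfg n a p.1)

/-!
Every gap `a_k - a_j` of the extended configuration is an affine function of the free
coordinates and is positive on `U_{n-2}`, so by convexity of `x ↦ 1/x` on `(0, ∞)` each term of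
`ω` is convex there. If `A i ≠ B i`, the term of the pair `(a_1, a_{i+2}) = (0, a_{i+2})` is
`1 / a_{i+2}`, on which the strict convexity of `x ↦ 1/x` makes the inequality strict.
-/

open Set

lemma extCfg_lineCombo (n : ℕ) (A B : Fin (n - 2) → ℝ) (t : ℝ) (i : Fin n) :
    extCfg n (t • A + (1 - t) • B) i = t * extCfg n A i + (1 - t) * extCfg n B i := by
  simp only [extCfg, Pi.add_apply, Pi.smul_apply, smul_eq_mul]
  split_ifs <;> ring

lemma extCfg_lineCombo_sub (n : ℕ) (A B : Fin (n - 2) → ℝ) (t : ℝ) (p q : Fin n) :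
    extCfg n (t • A + (1 - t) • B) q - extCfg n (t • A + (1 - t) • B) p =
      t * (extCfg n A q - extCfg n A p) + (1 - t) * (extCfg n B q - extCfg n B p) := by
  rw [extCfg_lineCombo, extCfg_lineCombo]
  ring

lemma extCfg_zero (n : ℕ) (a : Fin (n - 2) → ℝ) (h : 0 < n) : extCfg n a ⟨0, h⟩ = 0 := rfl

lemma extCfg_succ (n : ℕ) (a : Fin (n - 2) → ℝ) (i : Fin (n - 2)) :
    extCfg n a ⟨i + 1, by omega⟩ = a i := by
  have hi := i.isLt
  simp only [extCfg, Nat.add_one_ne_zero, ↓reduceDIte, Nat.add_sub_cancel]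
  rw [dif_neg (by omega)]

lemma one_div_lineCombo_le {x y t : ℝ} (hx : 0 < x) (hy : 0 < y) (ht0 : 0 ≤ t) (ht1 : t ≤ 1) :
    1 / (t * x + (1 - t) * y) ≤ t * (1 / x) + (1 - t) * (1 / y) := by
  have h := (strictConvexOn_zpow (m := -1) (by norm_num) (by norm_num)).convexOn.2
    (mem_Ioi.2 hx) (mem_Ioi.2 hy) ht0 (sub_nonneg.2 ht1) (by ring)
  simpa only [smul_eq_mul, zpow_neg_one, one_div] using h

lemma one_div_lineCombo_lt {x y t : ℝ} (hx : 0 < x) (hy : 0 < y) (hxy : x ≠ y)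
    (ht0 : 0 < t) (ht1 : t < 1) :
    1 / (t * x + (1 - t) * y) < t * (1 / x) + (1 - t) * (1 / y) := by
  have h := (strictConvexOn_zpow (m := -1) (by norm_num) (by norm_num)).2
    (mem_Ioi.2 hx) (mem_Ioi.2 hy) hxy ht0 (sub_pos.2 ht1) (by ring)
  simpa only [smul_eq_mul, zpow_neg_one, one_div] using h

theorem needleOmega_strictConvexOn_general (n : ℕ)
    (A B : Fin (n - 2) → ℝ) (hA : A ∈ needleU n) (hB : B ∈ needleU n) (hAB : A ≠ B)
    (t : ℝ) (ht0 : 0 < t) (ht1 : t < 1) :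
    needleOmega n (t • A + (1 - t) • B) <
      t * needleOmega n A + (1 - t) * needleOmega n B := by
  obtain ⟨i, hi⟩ := Function.ne_iff.1 hAB
  simp only [needleOmega, extCfg_lineCombo_sub, Finset.mul_sum, ← Finset.sum_add_distrib]
  have hin := i.isLt
  have hlt : (⟨0, by omega⟩ : Fin n) < ⟨i + 1, by omega⟩ := Fin.mk_lt_mk.2 i.val.succ_pos
  refine Finset.sum_lt_sum (fun p hp => ?_)
    ⟨(_, _), Finset.mem_filter.2 ⟨Finset.mem_univ _, hlt⟩, ?_⟩
  · have hp : p.1 < p.2 := (Finset.mem_filter.1 hp).2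
    exact one_div_lineCombo_le (sub_pos.2 (hA hp)) (sub_pos.2 (hB hp)) ht0.le ht1.le
  · have hApos := hA hlt
    have hBpos := hB hlt
    simp only [extCfg_zero, extCfg_succ, sub_zero] at hApos hBpos ⊢
    exact one_div_lineCombo_lt hApos hBpos hi ht0 ht1

/-- The function `ω` is strictly convex on `U_{n-2}`. -/
theorem needleOmega_strictConvexOn (n : ℕ) (hn : 4 ≤ n)
    (A B : Fin (n - 2) → ℝ) (hA : A ∈ needleU n) (hB : B ∈ needleU n) (hAB : A ≠ B)
    (t : ℝ) (ht0 : 0 < t) (ht1 : t < 1) :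
    needleOmega n (t • A + (1 - t) • B) <
      t * needleOmega n A + (1 - t) * needleOmega n B :=
  needleOmega_strictConvexOn_general n A B hA hB hAB t ht0 ht1
end

section
/- The function ω tends to +∞ at the boundary of its domain: for every point y in the topological frontier of U_{n−2}, ω(a) tends to +∞ as a tends to y within U_{n−2}. -/
/-! The domain is the preimage of the strictly monotone configurations under a continuous map,
so it is open and its closure consists of monotone configurations. A frontier point therefore
has two coinciding positions `a_i = a_j` with `i < j`, and the single summand `1/(a_j - a_i)`
of `ω` already tends to `+∞` there. -/

open Filter Topology

theorem isOpen_setOf_strictMono {ι α : Type*} [Preorder ι] [Finite ι] [TopologicalSpace α]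
    [LinearOrder α] [OrderClosedTopology α] : IsOpen {f : ι → α | StrictMono f} := by
  have h : {f : ι → α | StrictMono f} = ⋂ i, ⋂ j, {f | i < j → f i < f j} := by
    ext f
    simp [StrictMono]
  rw [h]
  refine isOpen_iInter_of_finite fun i => isOpen_iInter_of_finite fun j => ?_
  by_cases hij : i < j
  · simpa [hij] using isOpen_lt (continuous_apply i) (continuous_apply j)
  · simp [hij]

theorem exists_lt_eq_of_monotone_of_not_strictMono {ι α : Type*} [Preorder ι] [PartialOrder α]
    {f : ι → α} (hf : Monotone f) (hs : ¬ StrictMono f) : ∃ i j, i < j ∧ f i = f j := by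
  simp only [StrictMono, not_forall] at hs
  obtain ⟨i, j, hij, hji⟩ := hs
  exact ⟨i, j, hij, (hf hij.le).eq_of_not_lt hji⟩

theorem ContinuousAt.tendsto_inv_nhdsWithin_atTop {X : Type*} [TopologicalSpace X] {g : X → ℝ} {s : Set X}
    {y : X} (hg : ContinuousAt g y) (hy : g y = 0) (hpos : ∀ x ∈ s, 0 < g x) :
    Tendsto (fun x => (g x)⁻¹) (𝓝[s] y) atTop := by
  refine Tendsto.inv_tendsto_nhdsGT_zero (tendsto_nhdsWithin_iff.2 ⟨?_, ?_⟩)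
  · exact hy ▸ hg.tendsto.mono_left nhdsWithin_le_nhds
  · exact eventually_nhdsWithin_of_forall hpos

@[fun_prop]
theorem continuous_extCfg (n : ℕ) : Continuous (extCfg n) := by
  refine continuous_pi fun i => ?_
  unfold extCfg
  split_ifs
  · exact continuous_const
  · exact continuous_const
  · exact continuous_apply _

theorem isOpen_needleU (n : ℕ) : IsOpen (needleU n) :=
  isOpen_setOf_strictMono.preimage (continuous_extCfg n)

theorem monotone_extCfg_of_mem_closure {n : ℕ} {y : Fin (n - 2) → ℝ}
    (hy : y ∈ closure (needleU n)) : Monotone (extCfg n y) :=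
  closure_minimal (fun _ ha => StrictMono.monotone ha)
    (isClosed_monotone.preimage (continuous_extCfg n)) hy

theorem exists_collision_of_mem_frontier {n : ℕ} {y : Fin (n - 2) → ℝ}
    (hy : y ∈ frontier (needleU n)) : ∃ i j, i < j ∧ extCfg n y i = extCfg n y j := by
  rw [(isOpen_needleU n).frontier_eq] at hy
  exact exists_lt_eq_of_monotone_of_not_strictMono (monotone_extCfg_of_mem_closure hy.1) hy.2

theorem inv_sub_le_needleOmega {n : ℕ} {a : Fin (n - 2) → ℝ} (ha : a ∈ needleU n)
    {i j : Fin n} (hij : i < j) : (extCfg n a j - extCfg n a i)⁻¹ ≤ needleOmega n a := by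
  rw [← one_div]
  refine Finset.single_le_sum (f := fun p : Fin n × Fin n => 1 / (extCfg n a p.2 - extCfg n a p.1))
    (fun p hp => ?_) (Finset.mem_filter.2 ⟨Finset.mem_univ (i, j), hij⟩)
  exact one_div_nonneg.2 (sub_nonneg.2 (ha (Finset.mem_filter.1 hp).2).le)

theorem needleOmega_tendsto_atTop_frontier_general (n : ℕ)
    (y : Fin (n - 2) → ℝ) (hy : y ∈ frontier (needleU n)) :
    Filter.Tendsto (needleOmega n) (nhdsWithin y (needleU n)) Filter.atTop := by
  obtain ⟨i, j, hij, hcoll⟩ := exists_collision_of_mem_frontier hy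
  have hcont : Continuous fun a => extCfg n a j - extCfg n a i := by fun_prop
  have hgap : Tendsto (fun a => (extCfg n a j - extCfg n a i)⁻¹) (𝓝[needleU n] y) atTop :=
    hcont.continuousAt.tendsto_inv_nhdsWithin_atTop (sub_eq_zero.2 hcoll.symm)
      fun a ha => sub_pos.2 (ha hij)
  exact tendsto_atTop_mono' _
    (eventually_nhdsWithin_of_forall fun a ha => inv_sub_le_needleOmega ha hij) hgap

/-- The function `ω` tends to `+∞` at the boundary of its domain: for every point `y` in the
topological frontier of `U_{n-2}`, `ω(a) → +∞` as `a → y` within `U_{n-2}`. -/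
theorem needleOmega_tendsto_atTop_frontier (n : ℕ) (hn : 4 ≤ n)
    (y : Fin (n - 2) → ℝ) (hy : y ∈ frontier (needleU n)) :
    Filter.Tendsto (needleOmega n) (nhdsWithin y (needleU n)) Filter.atTop :=
  needleOmega_tendsto_atTop_frontier_general n y hy
end

section
/- Let U be a nonempty open bounded convex subset of a finite-dimensional real normed vector space E, and let f : E → ℝ be differentiable on U, strictly convex on U, and such that f(a) tends to +∞ as a tends to any point of the frontier of U within U. Then f attains a minimum on U at a unique point x₀, and x₀ is the unique critical point of f in U (the unique point of U at which the derivative of f vanishes). -/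
/-!
The blow-up at the frontier makes every sublevel set `{x ∈ U | f x ≤ c}` closed in `E`, hence
compact as `U` is bounded, so `f` attains its minimum on `U`; strict convexity makes the minimiser
unique. A critical point of a convex function is a minimiser, because along each segment the
derivative at the start is bounded by the secant slope; so the critical point is unique as well.
-/

open Filter Set Topology

section Sublevel

variable {X β : Type*} [TopologicalSpace X] [LinearOrder β] [TopologicalSpace β]
  [ClosedIicTopology β] [NoMaxOrder β] {U : Set X} {f : X → β}

theorem isClosed_sublevel_of_tendsto_atTop_frontier (hU : IsOpen U) (hf : ContinuousOn f U)
    (hblow : ∀ y ∈ frontier U, Tendsto f (𝓝[U] y) atTop) (c : β) :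
    IsClosed {x ∈ U | f x ≤ c} := by
  set S := {x ∈ U | f x ≤ c}
  have hSU : S ⊆ U := fun x hx => hx.1
  rw [← closure_subset_iff_isClosed]
  intro y hy
  have : (𝓝[S] y).NeBot := mem_closure_iff_clusterPt.1 hy
  have hle : ∀ᶠ x in 𝓝[S] y, f x ≤ c := eventually_nhdsWithin_of_forall fun x hx => hx.2
  by_cases hyU : y ∈ U
  · have hfy : Tendsto f (𝓝[S] y) (𝓝 (f y)) :=
      ((hf y hyU).continuousAt (hU.mem_nhds hyU)).continuousWithinAt.tendsto
    exact ⟨hyU, le_of_tendsto hfy hle⟩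
  · have hyfr : y ∈ frontier U := by
      rw [hU.frontier_eq]
      exact ⟨closure_mono hSU hy, hyU⟩
    have htop : Tendsto f (𝓝[S] y) atTop := (hblow y hyfr).mono_left (nhdsWithin_mono y hSU)
    obtain ⟨x, hgt, hle⟩ := ((htop.eventually_gt_atTop c).and hle).exists
    exact absurd hle (not_le.2 hgt)

theorem exists_isMinOn_of_tendsto_atTop_frontier (hne : U.Nonempty) (hU : IsOpen U)
    (hUc : IsCompact (closure U)) (hf : ContinuousOn f U)
    (hblow : ∀ y ∈ frontier U, Tendsto f (𝓝[U] y) atTop) :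
    ∃ x ∈ U, IsMinOn f U x := by
  obtain ⟨a, ha⟩ := hne
  set S := {x ∈ U | f x ≤ f a}
  have hSU : S ⊆ U := fun x hx => hx.1
  have hS : IsCompact S :=
    hUc.of_isClosed_subset (isClosed_sublevel_of_tendsto_atTop_frontier hU hf hblow (f a))
      (hSU.trans subset_closure)
  obtain ⟨x₀, hx₀, hmin⟩ := hS.exists_isMinOn ⟨a, ha, le_rfl⟩ (hf.mono hSU)
  refine ⟨x₀, hx₀.1, fun x hx => ?_⟩
  rcases le_or_gt (f x) (f a) with hxa | hax
  · exact hmin ⟨hx, hxa⟩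
  · exact (hmin ⟨ha, le_rfl⟩).trans hax.le

end Sublevel

theorem ConvexOn.isMinOn_of_hasFDerivAt_eq_zero {E : Type*} [NormedAddCommGroup E]
    [NormedSpace ℝ E] {s : Set E} {f : E → ℝ} {x : E} (hf : ConvexOn ℝ s f) (hx : x ∈ s)
    (hfx : HasFDerivAt f (0 : E →L[ℝ] ℝ) x) : IsMinOn f s x := by
  intro y hy
  set g : ℝ →ᵃ[ℝ] E := AffineMap.lineMap x y
  have hmaps : MapsTo g (Icc 0 1) s := by
    simpa only [g, mapsTo_iff_image_subset, ← segment_eq_image_lineMap]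
      using hf.1.segment_subset hx hy
  have hgconv : ConvexOn ℝ (Icc 0 1) (f ∘ g) :=
    (hf.comp_affineMap g).subset hmaps (convex_Icc 0 1)
  have hgderiv : HasDerivAt (f ∘ g) 0 0 := by
    have hfx' : HasFDerivAt f (0 : E →L[ℝ] ℝ) (g 0) := by
      simpa only [g, AffineMap.lineMap_apply_zero] using hfx
    simpa using hfx'.comp_hasDerivAt (0 : ℝ) AffineMap.hasDerivAt_lineMap
  have hslope := hgconv.le_slope_of_hasDerivAt (left_mem_Icc.2 zero_le_one)
    (right_mem_Icc.2 zero_le_one) zero_lt_one hgderiv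
  simpa [slope_def_field, g] using hslope

theorem exists_unique_min_and_critical_of_strictConvexOn_general
    (E : Type*) [NormedAddCommGroup E] [NormedSpace ℝ E] [FiniteDimensional ℝ E]
    (U : Set E) (hne : U.Nonempty) (hopen : IsOpen U)
    (hbdd : Bornology.IsBounded U)
    (f : E → ℝ) (hdiff : ∀ x ∈ U, DifferentiableAt ℝ f x)
    (hsc : StrictConvexOn ℝ U f)
    (hblow : ∀ y ∈ frontier U, Filter.Tendsto f (nhdsWithin y U) Filter.atTop) :
    ∃ x₀ ∈ U, IsMinOn f U x₀ ∧ (∀ x ∈ U, IsMinOn f U x → x = x₀) ∧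
      fderiv ℝ f x₀ = 0 ∧ ∀ x ∈ U, fderiv ℝ f x = 0 → x = x₀ := by
  have hcont : ContinuousOn f U := fun x hx => (hdiff x hx).continuousAt.continuousWithinAt
  obtain ⟨x₀, hx₀, hmin⟩ :=
    exists_isMinOn_of_tendsto_atTop_frontier hne hopen hbdd.isCompact_closure hcont hblow
  have huniq : ∀ x ∈ U, IsMinOn f U x → x = x₀ :=
    fun x hx hxmin => hsc.eq_of_isMinOn hxmin hmin hx hx₀
  refine ⟨x₀, hx₀, hmin, huniq, (hmin.isLocalMin (hopen.mem_nhds hx₀)).fderiv_eq_zero,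
    fun x hx hfx => huniq x hx ?_⟩
  exact hsc.convexOn.isMinOn_of_hasFDerivAt_eq_zero hx (hfx ▸ (hdiff x hx).hasFDerivAt)

/-- Let `U` be a nonempty open bounded convex subset of a finite-dimensional real normed
vector space `E`, and let `f : E → ℝ` be differentiable on `U`, strictly convex on `U`, and
tend to `+∞` at every frontier point of `U` (along `U`). Then `f` attains a minimum on `U`
at a unique point `x₀`, and `x₀` is the unique critical point of `f` in `U`. -/
theorem exists_unique_min_and_critical_of_strictConvexOn
    (E : Type*) [NormedAddCommGroup E] [NormedSpace ℝ E] [FiniteDimensional ℝ E]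
    (U : Set E) (hne : U.Nonempty) (hopen : IsOpen U)
    (hbdd : Bornology.IsBounded U) (hconv : Convex ℝ U)
    (f : E → ℝ) (hdiff : ∀ x ∈ U, DifferentiableAt ℝ f x)
    (hsc : StrictConvexOn ℝ U f)
    (hblow : ∀ y ∈ frontier U, Filter.Tendsto f (nhdsWithin y U) Filter.atTop) :
    ∃ x₀ ∈ U, IsMinOn f U x₀ ∧ (∀ x ∈ U, IsMinOn f U x → x = x₀) ∧
      fderiv ℝ f x₀ = 0 ∧ ∀ x ∈ U, fderiv ℝ f x = 0 → x = x₀ :=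
  exists_unique_min_and_critical_of_strictConvexOn_general E U hne hopen hbdd f hdiff hsc hblow
end

section
/- The equilibrium configuration is symmetric about the midpoint of the needle: if x_1 < x_2 < ⋯ < x_n is a configuration of n charges at equilibrium on the needle [0,1], then for every k with 1 ≤ k ≤ n, x_k = 1 − x_{n+1−k}. -/
open Finset

theorem exists_forall_le_and_forall_gt_lt {ι α : Type*} [Fintype ι] [Nonempty ι]
    [LinearOrder ι] [LinearOrder α] (f : ι → α) :
    ∃ i, (∀ j, f j ≤ f i) ∧ ∀ j, i < j → f j < f i := by
  obtain ⟨m, -, hm⟩ := exists_max_image univ f univ_nonempty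
  have hne : (univ.filter fun j => f j = f m).Nonempty := ⟨m, by simp⟩
  obtain ⟨hi_mem, hi_last⟩ := isGreatest_max' _ hne
  set i := (univ.filter fun j => f j = f m).max' hne
  have hfi : f i = f m := (mem_filter.mp hi_mem).2
  refine ⟨i, fun j => hfi ▸ hm j (mem_univ j), fun j hij => ?_⟩
  refine lt_of_le_of_ne (hfi ▸ hm j (mem_univ j)) fun hfj => ?_
  exact (hij.trans_le (hi_last (by simp [hfj, hfi]))).false

section

variable {α : Type*} [Field α] [LinearOrder α] [IsStrictOrderedRing α]

theorem one_div_sq_le_one_div_sq {a b : α} (ha : 0 < a) (hab : a ≤ b) :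
    1 / b ^ 2 ≤ 1 / a ^ 2 :=
  one_div_le_one_div_of_le (by positivity) (pow_le_pow_left₀ ha.le hab 2)

theorem one_div_sq_lt_one_div_sq {a b : α} (ha : 0 < a) (hab : a < b) :
    1 / b ^ 2 < 1 / a ^ 2 :=
  one_div_lt_one_div_of_lt (by positivity) (pow_lt_pow_left₀ hab ha.le two_ne_zero)

end

namespace needleEquilibrium

variable {n : ℕ}

noncomputable def leftForce (x : Fin n → ℝ) (i : Fin n) : ℝ :=
  ∑ j ∈ univ.filter (fun j => j < i), 1 / (x i - x j) ^ 2

noncomputable def rightForce (x : Fin n → ℝ) (i : Fin n) : ℝ :=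
  ∑ j ∈ univ.filter (fun j => i < j), 1 / (x i - x j) ^ 2

theorem leftForce_le_of_sub_le {x y : Fin n → ℝ} {i : Fin n} (hy : StrictMono y)
    (h : ∀ j < i, y i - y j ≤ x i - x j) : leftForce x i ≤ leftForce y i := by
  refine sum_le_sum fun j hj => ?_
  have hji : j < i := (mem_filter.mp hj).2
  exact one_div_sq_le_one_div_sq (sub_pos.mpr (hy hji)) (h j hji)

theorem rightForce_lt_of_sub_lt {x y : Fin n → ℝ} {i : Fin n} (hx : StrictMono x)
    (hi : ∃ j, i < j) (h : ∀ j, i < j → x j - x i < y j - y i) :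
    rightForce y i < rightForce x i := by
  obtain ⟨j₀, hj₀⟩ := hi
  refine sum_lt_sum_of_nonempty ⟨j₀, by simpa using hj₀⟩ fun j hj => ?_
  have hij : i < j := (mem_filter.mp hj).2
  rw [← neg_sub (x j), ← neg_sub (y j), neg_sq, neg_sq]
  exact one_div_sq_lt_one_div_sq (sub_pos.mpr (hx hij)) (h j hij)

theorem leftForce_eq_rightForce {x : Fin n → ℝ} (hx : needleEquilibrium n x) {i : Fin n}
    (hi₀ : i.val ≠ 0) (hi₁ : i.val ≠ n - 1) : leftForce x i = rightForce x i :=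
  hx.2.2.2 i (by omega) (by omega)

theorem leftForce_reflect (c : ℝ) (x : Fin n → ℝ) (i : Fin n) :
    leftForce (fun k => c - x k.rev) i = rightForce x i.rev := by
  refine sum_equiv Fin.revPerm (fun j => ?_) fun j _ => ?_
  · simp [Fin.rev_lt_rev]
  · simp only [Fin.revPerm_apply]
    ring

theorem rightForce_reflect (c : ℝ) (x : Fin n → ℝ) (i : Fin n) :
    rightForce (fun k => c - x k.rev) i = leftForce x i.rev := by
  refine sum_equiv Fin.revPerm (fun j => ?_) fun j _ => ?_
  · simp [Fin.rev_lt_rev]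
  · simp only [Fin.revPerm_apply]
    ring

theorem reflect {x : Fin n → ℝ} (hx : needleEquilibrium n x) :
    needleEquilibrium n fun k => 1 - x k.rev := by
  refine ⟨fun a b hab => sub_lt_sub_left (hx.1 (Fin.rev_lt_rev.mpr hab)) 1,
    fun i hi => ?_, fun i hi => ?_, fun i hi₀ hi₁ => ?_⟩
  · simp [hx.2.2.1 i.rev (by simp [hi])]
  · simp [hx.2.1 i.rev (by simp only [Fin.val_rev]; omega)]
  · show leftForce (fun k => 1 - x k.rev) i = rightForce (fun k => 1 - x k.rev) i
    rw [leftForce_reflect, rightForce_reflect]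
    exact (hx.leftForce_eq_rightForce (by simp only [Fin.val_rev]; omega)
      (by simp only [Fin.val_rev]; omega)).symm

theorem le_s7 {x y : Fin n → ℝ} (hx : needleEquilibrium n x) (hy : needleEquilibrium n y) :
    x ≤ y := by
  intro k
  by_contra! hk
  have : Nonempty (Fin n) := ⟨k⟩
  obtain ⟨i, hmax, hlast⟩ := exists_forall_le_and_forall_gt_lt fun j => x j - y j
  have hpos : 0 < x i - y i := by linarith [hmax k]
  have hi₀ : i.val ≠ 0 := fun h => by linarith [hx.2.1 i h, hy.2.1 i h]
  have hi₁ : i.val ≠ n - 1 := fun h => by linarith [hx.2.2.1 i h, hy.2.2.1 i h]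
  have hL : leftForce x i ≤ leftForce y i :=
    leftForce_le_of_sub_le hy.1 fun j _ => by linarith [hmax j]
  have hR : rightForce y i < rightForce x i :=
    rightForce_lt_of_sub_lt hx.1 ⟨⟨n - 1, by omega⟩, Fin.lt_def.mpr (by dsimp only; omega)⟩
      fun j hj => by linarith [hlast j hj]
  linarith [hx.leftForce_eq_rightForce hi₀ hi₁, hy.leftForce_eq_rightForce hi₀ hi₁]

theorem unique {x y : Fin n → ℝ} (hx : needleEquilibrium n x) (hy : needleEquilibrium n y) :
    x = y :=
  le_antisymm (hx.le_s7 hy) (hy.le_s7 hx)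

end needleEquilibrium

/-- The equilibrium configuration is symmetric about the midpoint of the needle: if
`x_1 < ⋯ < x_n` is a configuration of `n` charges at equilibrium on `[0,1]`, then
for every `k`, `x_k = 1 - x_{n+1-k}` (0-indexed: `x k = 1 - x (n-1-k)`). -/
theorem needleEquilibrium_symm (n : ℕ) (x : Fin n → ℝ)
    (hx : needleEquilibrium n x) (k : Fin n) :
    x k = 1 - x ⟨n - 1 - k.val, by omega⟩ := by
  have hrev : k.rev = ⟨n - 1 - k.val, by omega⟩ := Fin.ext (by simp only [Fin.val_rev]; omega)
  rw [← hrev]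
  exact congrFun (hx.unique hx.reflect) k
end

section
/- For a real number α with 0 < α < 1/2, the tuple (0, α, 1−α, 1) is a configuration of 4 charges at equilibrium on the needle [0,1] if and only if 1/α² = 1/(1−α)² + 1/(1−2α)², and this equation holds if and only if α⁴ + 6α³ − 11α² + 6α − 1 = 0. -/
theorem needleEquilibrium_four_iff (x : Fin 4 → ℝ) :
    needleEquilibrium 4 x ↔
      (x 0 < x 1 ∧ x 1 < x 2 ∧ x 2 < x 3) ∧ x 0 = 0 ∧ x 3 = 1 ∧
        1 / (x 1 - x 0) ^ 2 = 1 / (x 2 - x 1) ^ 2 + 1 / (x 3 - x 1) ^ 2 ∧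
        1 / (x 2 - x 0) ^ 2 + 1 / (x 2 - x 1) ^ 2 = 1 / (x 3 - x 2) ^ 2 := by
  simp only [needleEquilibrium, Fin.strictMono_iff_lt_succ, Fin.forall_fin_succ,
    Finset.sum_filter, Fin.sum_univ_four, IsEmpty.forall_iff]
  simp [sub_sq_comm (x 1) (x 2), sub_sq_comm (x 1) (x 3), sub_sq_comm (x 2) (x 3)]

theorem one_div_sq_eq_add_iff_quartic_eq_zero {α : ℝ} (h0 : α ≠ 0) (h1 : 1 - α ≠ 0) (h2 : 1 - 2 * α ≠ 0) :
    1 / α ^ 2 = 1 / (1 - α) ^ 2 + 1 / (1 - 2 * α) ^ 2 ↔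
      α ^ 4 + 6 * α ^ 3 - 11 * α ^ 2 + 6 * α - 1 = 0 := by
  rw [div_add_div _ _ (pow_ne_zero 2 h1) (pow_ne_zero 2 h2),
    div_eq_div_iff (pow_ne_zero 2 h0) (by positivity)]
  constructor <;> intro h <;> linear_combination (-1 : ℝ) * h

/-- For `0 < α < 1/2`, the tuple `(0, α, 1-α, 1)` is a configuration of 4 charges at
equilibrium on the needle `[0,1]` iff `1/α² = 1/(1-α)² + 1/(1-2α)²`, and this equation
holds iff `α⁴ + 6α³ - 11α² + 6α - 1 = 0`. -/
theorem needleEquilibrium_four (α : ℝ) (h0 : 0 < α) (h1 : α < 1 / 2) :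
    (needleEquilibrium 4 ![0, α, 1 - α, 1] ↔
        1 / α ^ 2 = 1 / (1 - α) ^ 2 + 1 / (1 - 2 * α) ^ 2) ∧
      (1 / α ^ 2 = 1 / (1 - α) ^ 2 + 1 / (1 - 2 * α) ^ 2 ↔
        α ^ 4 + 6 * α ^ 3 - 11 * α ^ 2 + 6 * α - 1 = 0) := by
  refine ⟨?_, one_div_sq_eq_add_iff_quartic_eq_zero h0.ne' (by linarith) (by linarith)⟩
  have hgap : 1 - α - α = 1 - 2 * α := by ring
  simp only [needleEquilibrium_four_iff, Fin.isValue, Matrix.cons_val_zero, Matrix.cons_val_one,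
    Matrix.cons_val, sub_lt_self_iff, sub_zero, one_div, hgap, sub_sub_cancel, true_and]
  -- the configuration is symmetric under `x ↦ 1 - x`, so both balance conditions are one equation
  exact ⟨fun ⟨_, _, h⟩ => h.symm, fun h => ⟨⟨h0, by linarith, h0⟩, by linarith, h.symm⟩⟩
end

section
/- Interlacing of equilibria: let n ≥ 3, let x_1 < x_2 < ⋯ < x_n be the configuration of n charges at equilibrium on [0,1], and let y_1 < y_2 < ⋯ < y_{n+1} be the configuration of n+1 charges at equilibrium on [0,1]. Then for every k with 2 ≤ k ≤ n, x_{k−1} < y_k < x_k. -/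
open Finset

namespace Needle

noncomputable def leftForce (f : ℕ → ℝ) (i : ℕ) : ℝ := ∑ j ∈ Iio i, 1 / (f i - f j) ^ 2

noncomputable def rightForce (f : ℕ → ℝ) (N i : ℕ) : ℝ := ∑ j ∈ Ioo i N, 1 / (f i - f j) ^ 2

lemma leftForce_succ (f : ℕ → ℝ) (i : ℕ) :
    leftForce f (i + 1) = leftForce (fun j => f (j + 1)) i + 1 / (f (i + 1) - f 0) ^ 2 := by
  simp only [leftForce, Nat.Iio_eq_range, sum_range_succ']

lemma rightForce_succ_succ (f : ℕ → ℝ) (N i : ℕ) :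
    rightForce f (N + 1) (i + 1) = rightForce (fun j => f (j + 1)) N i := by
  rw [rightForce, rightForce, ← map_add_right_Ioo, sum_map]
  rfl

lemma rightForce_succ_of_lt (f : ℕ → ℝ) {N i : ℕ} (h : i < N) :
    rightForce f (N + 1) i = rightForce f N i + 1 / (f i - f N) ^ 2 := by
  rw [rightForce, Ioo_add_one_right_eq_Ioc, ← Ioo_insert_right h, sum_insert right_notMem_Ioo,
    add_comm, rightForce]

lemma one_div_sq_le_one_div_sq {a b : ℝ} (ha : 0 < a) (hab : a ≤ b) : 1 / b ^ 2 ≤ 1 / a ^ 2 :=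
  one_div_le_one_div_of_le (by positivity) (pow_le_pow_left₀ ha.le hab 2)

lemma leftForce_le_leftForce {p q : ℕ → ℝ} {m : ℕ} (hp : ∀ j < m, p j < p m)
    (hmax : ∀ j < m, q j - p j ≤ q m - p m) : leftForce q m ≤ leftForce p m := by
  refine sum_le_sum fun j hj => ?_
  rw [mem_Iio] at hj
  have := hmax j hj
  exact one_div_sq_le_one_div_sq (sub_pos.2 (hp j hj)) (by linarith)

lemma rightForce_le_rightForce {p q : ℕ → ℝ} {N m : ℕ} (hq : ∀ j ∈ Ioo m N, q m < q j)
    (hmax : ∀ j ∈ Ioo m N, q j - p j ≤ q m - p m) : rightForce p N m ≤ rightForce q N m := by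
  refine sum_le_sum fun j hj => ?_
  have := hmax j hj
  rw [← neg_sub (p j), ← neg_sub (q j), neg_sq, neg_sq]
  exact one_div_sq_le_one_div_sq (sub_pos.2 (hq j hj)) (by linarith)

lemma lt_zero_of_not_isMaxOn_interior {d : ℕ → ℝ} {N : ℕ} (h0 : d 0 ≤ 0) (hlast : d (N - 1) ≤ 0)
    (hint : ∀ m, 0 < m → m < N - 1 → ¬ IsMaxOn d (Set.Iio N) m) {k : ℕ} (hk0 : 0 < k)
    (hk : k < N - 1) : d k < 0 := by
  obtain ⟨m, hm, hmax⟩ :=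
    Set.exists_max_image (Set.Iio N) d (Set.finite_Iio N) ⟨k, Set.mem_Iio.2 (by omega)⟩
  by_contra! hdk
  by_cases hm_int : 0 < m ∧ m < N - 1
  · exact hint m hm_int.1 hm_int.2 hmax
  have hdm : d m ≤ 0 := by
    rw [Set.mem_Iio] at hm
    obtain rfl | rfl : m = 0 ∨ m = N - 1 := by omega
    exacts [h0, hlast]
  exact hint k hk0 hk fun j hj => (hmax j hj).trans (hdm.trans hdk)

structure IsEquilibrium (N : ℕ) (f : ℕ → ℝ) : Prop where
  strictMonoOn : StrictMonoOn f (Set.Iio N)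
  map_zero : f 0 = 0
  map_last : f (N - 1) = 1
  balance : ∀ i, 0 < i → i < N - 1 → leftForce f i = rightForce f N i

namespace IsEquilibrium

variable {n : ℕ} {X Y : ℕ → ℝ}

lemma lt {f : ℕ → ℝ} (hf : IsEquilibrium n f) {i j : ℕ} (hij : i < j) (hj : j < n) : f i < f j :=
  hf.strictMonoOn (Set.mem_Iio.2 (hij.trans hj)) (Set.mem_Iio.2 hj) hij

lemma not_isMaxOn_succ_sub (hX : IsEquilibrium n X) (hY : IsEquilibrium (n + 1) Y) {m : ℕ}
    (hm0 : 0 < m) (hm : m < n - 1) : ¬ IsMaxOn (fun i => Y i - X i) (Set.Iio n) m := by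
  intro hmax
  have hleft : leftForce Y m ≤ leftForce X m :=
    leftForce_le_leftForce (fun j hj => hX.lt hj (by omega))
      (fun j hj => hmax (Set.mem_Iio.2 (by omega)))
  have hright : rightForce X n m ≤ rightForce Y n m :=
    rightForce_le_rightForce (fun j hj => hY.lt (mem_Ioo.1 hj).1 (by linarith [mem_Ioo.1 hj]))
      (fun j hj => hmax (Set.mem_Iio.2 (mem_Ioo.1 hj).2))
  have hfar : 0 < 1 / (Y m - Y n) ^ 2 := by
    have : Y m - Y n ≠ 0 := sub_ne_zero.2 (hY.lt (by omega) (by omega)).ne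
    positivity
  have hXbal := hX.balance m hm0 hm
  have hYbal := hY.balance m hm0 (by omega)
  rw [rightForce_succ_of_lt Y (by omega)] at hYbal
  linarith

lemma not_isMaxOn_sub_succ (hX : IsEquilibrium n X) (hY : IsEquilibrium (n + 1) Y) {m : ℕ}
    (hm0 : 0 < m) (hm : m < n - 1) : ¬ IsMaxOn (fun i => X i - Y (i + 1)) (Set.Iio n) m := by
  intro hmax
  have hleft : leftForce X m ≤ leftForce (fun j => Y (j + 1)) m :=
    leftForce_le_leftForce (fun j hj => hY.lt (by omega) (by omega))
      (fun j hj => hmax (Set.mem_Iio.2 (by omega)))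
  have hright : rightForce (fun j => Y (j + 1)) n m ≤ rightForce X n m :=
    rightForce_le_rightForce (fun j hj => hX.lt (mem_Ioo.1 hj).1 (mem_Ioo.1 hj).2)
      (fun j hj => hmax (Set.mem_Iio.2 (mem_Ioo.1 hj).2))
  have hfar : 0 < 1 / (Y (m + 1) - Y 0) ^ 2 := by
    have : Y (m + 1) - Y 0 ≠ 0 := sub_ne_zero.2 (hY.lt (by omega) (by omega)).ne'
    positivity
  have hXbal := hX.balance m hm0 hm
  have hYbal := hY.balance (m + 1) (by omega) (by omega)
  rw [leftForce_succ, rightForce_succ_succ] at hYbal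
  linarith

lemma lt_of_succ (hX : IsEquilibrium n X) (hY : IsEquilibrium (n + 1) Y) {k : ℕ} (hk0 : 0 < k)
    (hk : k < n) : Y k < X k := by
  have hYn : Y n = 1 := by simpa using hY.map_last
  have hlast : Y (n - 1) - X (n - 1) < 0 := by
    have := hY.lt (show n - 1 < n by omega) (by omega)
    linarith [hX.map_last]
  obtain hk | rfl : k < n - 1 ∨ k = n - 1 := by omega
  · have := lt_zero_of_not_isMaxOn_interior (d := fun i => Y i - X i)
      (by simp [hX.map_zero, hY.map_zero]) hlast.le
      (fun m hm0 hm => hX.not_isMaxOn_succ_sub hY hm0 hm) hk0 hk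
    linarith
  · linarith

lemma lt_succ_of_succ (hX : IsEquilibrium n X) (hY : IsEquilibrium (n + 1) Y) {k : ℕ}
    (hk : k < n - 1) : X k < Y (k + 1) := by
  have hfirst : X 0 - Y (0 + 1) < 0 := by
    have := hY.lt (show 0 < 1 by omega) (by omega)
    linarith [hX.map_zero, hY.map_zero]
  have hlast : X (n - 1) - Y (n - 1 + 1) = 0 := by
    have hYn : Y n = 1 := by simpa using hY.map_last
    rw [Nat.sub_add_cancel (by omega), hX.map_last, hYn, sub_self]
  obtain rfl | hk0 := Nat.eq_zero_or_pos k
  · linarith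
  · have := lt_zero_of_not_isMaxOn_interior (d := fun i => X i - Y (i + 1)) hfirst.le hlast.le
      (fun m hm0 hm => hX.not_isMaxOn_sub_succ hY hm0 hm) hk0 hk
    linarith

end IsEquilibrium

def natExtend {n : ℕ} (x : Fin n → ℝ) (i : ℕ) : ℝ := if h : i < n then x ⟨i, h⟩ else 0

lemma natExtend_of_lt {n i : ℕ} (x : Fin n → ℝ) (h : i < n) : natExtend x i = x ⟨i, h⟩ :=
  dif_pos h

lemma sum_filter_lt_eq_leftForce {n : ℕ} (x : Fin n → ℝ) (i : Fin n) :
    ∑ j ∈ univ.filter (· < i), 1 / (x i - x j) ^ 2 = leftForce (natExtend x) i := by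
  rw [filter_gt_eq_Iio, leftForce, ← Fin.map_valEmbedding_Iio, sum_map]
  simp [natExtend_of_lt]

lemma sum_filter_gt_eq_rightForce {n : ℕ} (x : Fin n → ℝ) (i : Fin n) :
    ∑ j ∈ univ.filter (i < ·), 1 / (x i - x j) ^ 2 = rightForce (natExtend x) n i := by
  rw [filter_lt_eq_Ioi, rightForce, ← Fin.map_valEmbedding_Ioi, sum_map]
  simp [natExtend_of_lt]

end Needle

open Needle in
lemma needleEquilibrium.isEquilibrium_natExtend {n : ℕ} {x : Fin n → ℝ} (hn : 0 < n)
    (hx : needleEquilibrium n x) : IsEquilibrium n (natExtend x) := by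
  obtain ⟨hmono, hzero, hlast, hbal⟩ := hx
  refine ⟨fun i hi j hj hij => ?_, ?_, ?_, fun i hi0 hi => ?_⟩
  · rw [natExtend_of_lt x hi, natExtend_of_lt x hj]
    exact hmono hij
  · rw [natExtend_of_lt x hn]
    exact hzero _ rfl
  · rw [natExtend_of_lt x (by omega)]
    exact hlast _ rfl
  · have := hbal ⟨i, by omega⟩ hi0 (by simp only; omega)
    rwa [sum_filter_lt_eq_leftForce, sum_filter_gt_eq_rightForce] at this

/-- Interlacing of equilibria: if `x_1 < ⋯ < x_n` is the configuration of `n` charges at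
equilibrium on `[0,1]` and `y_1 < ⋯ < y_{n+1}` that of `n+1` charges, then for every `k`
with `2 ≤ k ≤ n` one has `x_{k-1} < y_k < x_k` (1-indexed; below the index `k - 2`
corresponds to `x_{k-1}`, `k - 1` to `y_k` and `x_k`). -/
theorem needleEquilibrium_interlacing (n : ℕ)
    (x : Fin n → ℝ) (y : Fin (n + 1) → ℝ)
    (hx : needleEquilibrium n x) (hy : needleEquilibrium (n + 1) y)
    (k : ℕ) (hk2 : 2 ≤ k) (hkn : k ≤ n) :
    x ⟨k - 2, by omega⟩ < y ⟨k - 1, by omega⟩ ∧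
      y ⟨k - 1, by omega⟩ < x ⟨k - 1, by omega⟩ := by
  have hX := hx.isEquilibrium_natExtend (by omega)
  have hY := hy.isEquilibrium_natExtend (by omega)
  have hlower := hX.lt_succ_of_succ hY (k := k - 2) (by omega)
  have hupper := hX.lt_of_succ hY (k := k - 1) (by omega) (by omega)
  rw [show k - 2 + 1 = k - 1 by omega] at hlower
  rw [Needle.natExtend_of_lt x (by omega), Needle.natExtend_of_lt y (by omega)] at hlower hupper
  exact ⟨hlower, hupper⟩
end

section
/- Let n ≥ 3 and k be integers with 2 ≤ k ≤ n−1, and let x_{k−1} < x_k < x_{k+1} < x_{k+2} be real numbers satisfying x_k − x_{k−1} > x_{k+1} − x_k > x_{k+2} − x_{k+1}. Define y_k = ((k−1)·x_{k−1} + (n+1−k)·x_k)/n, y_{k+1} = (k·x_k + (n−k)·x_{k+1})/n, and y_{k+2} = ((k+1)·x_{k+1} + (n−k−1)·x_{k+2})/n. Then y_{k+1} − y_k > y_{k+2} − y_{k+1}. -/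
/-!
Since `n (y_{j+1} - y_j) = (j - 1)(x_j - x_{j-1}) + (n - j)(x_{j+1} - x_j)`, the difference of two
consecutive gaps of `y` is `((k - 1)(a - b) + (n - k - 1)(b - c)) / n`, where `a > b > c` are the
consecutive gaps of `x`; both terms are nonnegative and the first is positive because `k ≥ 2`.
-/

/-- The paper's `y_j`, with `u = x_{j-1}` and `v = x_j`. -/
noncomputable def chargeAverage (n j u v : ℝ) : ℝ := ((j - 1) * u + (n + 1 - j) * v) / n

lemma chargeAverage_add_one (n j v w : ℝ) :
    chargeAverage n (j + 1) v w = (j * v + (n - j) * w) / n := by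
  unfold chargeAverage; ring_nf

lemma chargeAverage_add_two (n j w x : ℝ) :
    chargeAverage n (j + 2) w x = ((j + 1) * w + (n - j - 1) * x) / n := by
  unfold chargeAverage; ring_nf

lemma chargeAverage_add_one_sub (n j u v w : ℝ) :
    chargeAverage n (j + 1) v w - chargeAverage n j u v
      = ((j - 1) * (v - u) + (n - j) * (w - v)) / n := by
  unfold chargeAverage; ring

lemma chargeAverage_gap_lt {n j u v w x : ℝ} (hj : 1 < j) (hjn : j + 1 ≤ n)
    (hgap₁ : w - v < v - u) (hgap₂ : x - w ≤ w - v) :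
    chargeAverage n (j + 2) w x - chargeAverage n (j + 1) v w
      < chargeAverage n (j + 1) v w - chargeAverage n j u v := by
  have hn : 0 < n := by linarith
  have hsucc := chargeAverage_add_one_sub n (j + 1) v w x
  rw [show j + 1 + 1 = j + 2 by ring] at hsucc
  rw [hsucc, chargeAverage_add_one_sub, div_lt_div_iff_of_pos_right hn]
  nlinarith [mul_pos (sub_pos.2 hj) (sub_pos.2 hgap₁),
    mul_nonneg (by linarith : 0 ≤ n - j - 1) (sub_nonneg.2 hgap₂)]

theorem gap_monotone_after_adding_charge_general (n k : ℕ) (hk2 : 2 ≤ k)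
    (hkn : k ≤ n - 1) (xkm1 xk xk1 xk2 : ℝ)
    (hgap1 : xk - xkm1 > xk1 - xk) (hgap2 : xk1 - xk > xk2 - xk1) :
    (((k : ℝ) * xk + ((n : ℝ) - k) * xk1) / n -
        (((k : ℝ) - 1) * xkm1 + ((n : ℝ) + 1 - k) * xk) / n) >
      ((((k : ℝ) + 1) * xk1 + ((n : ℝ) - k - 1) * xk2) / n -
        ((k : ℝ) * xk + ((n : ℝ) - k) * xk1) / n) := by
  have hk : (1 : ℝ) < k := by exact_mod_cast hk2
  have hkn' : (k : ℝ) + 1 ≤ n := by exact_mod_cast (by omega : k + 1 ≤ n)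
  rw [← chargeAverage_add_one, ← chargeAverage_add_two]
  exact chargeAverage_gap_lt (u := xkm1) hk hkn' hgap1 hgap2.le

/-- Let `n ≥ 3` and `2 ≤ k ≤ n-1` be integers, and let `x_{k-1} < x_k < x_{k+1} < x_{k+2}`
be reals with `x_k - x_{k-1} > x_{k+1} - x_k > x_{k+2} - x_{k+1}`. With
`y_k = ((k-1)x_{k-1} + (n+1-k)x_k)/n`, `y_{k+1} = (k x_k + (n-k)x_{k+1})/n`,
`y_{k+2} = ((k+1)x_{k+1} + (n-k-1)x_{k+2})/n`, one has `y_{k+1} - y_k > y_{k+2} - y_{k+1}`. -/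
theorem gap_monotone_after_adding_charge (n k : ℕ) (hn : 3 ≤ n) (hk2 : 2 ≤ k)
    (hkn : k ≤ n - 1) (xkm1 xk xk1 xk2 : ℝ)
    (hx1 : xkm1 < xk) (hx2 : xk < xk1) (hx3 : xk1 < xk2)
    (hgap1 : xk - xkm1 > xk1 - xk) (hgap2 : xk1 - xk > xk2 - xk1) :
    (((k : ℝ) * xk + ((n : ℝ) - k) * xk1) / n -
        (((k : ℝ) - 1) * xkm1 + ((n : ℝ) + 1 - k) * xk) / n) >
      ((((k : ℝ) + 1) * xk1 + ((n : ℝ) - k - 1) * xk2) / n -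
        ((k : ℝ) * xk + ((n : ℝ) - k) * xk1) / n) :=
  gap_monotone_after_adding_charge_general n k hk2 hkn xkm1 xk xk1 xk2 hgap1 hgap2
end

section
/- For each n ≥ 3 let x^{(n)}_1 < ⋯ < x^{(n)}_n be the configuration of n charges at equilibrium on [0,1], and define the distribution function F_n : ℝ → ℝ by F_n(t) = (1/n)·card{i : x^{(n)}_i ≤ t}. Then the sequence (F_n) converges uniformly on [0,1] to the distribution function G(t) = t of the uniform density; in particular F_n(t) → t for every t ∈ [0,1]. -/
/-!
An equilibrium is a critical point of the energy `E(x) = ∑_{i<j} 1 / (x_j - x_i)`, which is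
convex on increasing configurations with fixed endpoints; hence it is a minimiser, and
`E(x) ≤ E(uniform) = ∑_k (n - k)(n - 1) / k`. Group `E` by the index gap `k`: Cauchy–Schwarz and
telescoping bound the gap-`k` part from below by `(n - k)² / k`, which is the uniform value up to
`O(n)`. If the proportion `N / n` of charges in `[0, t]` differs from `t` by `ε`, splitting the
gap-`k` sum at `N` improves the bound by `ε² n² / k` for every `k ≤ ε n / 4`. Summed over
`k ≤ K`, this gains `ε² n² H_K`, which beats the `O(n²)` total slack once the harmonic number
`H_K` is large, contradicting minimality.
-/

open Finset

theorem Finset.sum_range_sum_range_eq_sum_range_sum_Ioo {M : Type*} [AddCommMonoid M] (n : ℕ)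
    (f : ℕ → ℕ → M) :
    ∑ j ∈ range n, ∑ i ∈ range j, f i j = ∑ i ∈ range n, ∑ j ∈ Ioo i n, f i j :=
  sum_comm' fun j i => by simp only [mem_range, mem_Ioo]; omega

theorem Finset.sum_range_sum_range_eq_sum_Ico_sum_range {M : Type*} [AddCommMonoid M] (n : ℕ)
    (f : ℕ → ℕ → M) :
    ∑ j ∈ range n, ∑ i ∈ range j, f i j =
      ∑ k ∈ Ico 1 n, ∑ i ∈ range (n - k), f i (i + k) := by
  rw [sum_sigma', sum_sigma']
  refine sum_nbij' (fun p => ⟨p.1 - p.2, p.2⟩) (fun q => ⟨q.2 + q.1, q.2⟩)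
    ?_ ?_ ?_ ?_ ?_ <;>
    rintro ⟨j, i⟩ h <;>
    simp only [mem_sigma, mem_range, mem_Ico, Sigma.ext_iff, heq_eq_eq, and_true] at h ⊢ <;>
    first | omega | (congr 1; omega)

theorem Finset.sum_range_add_sub_swap {M : Type*} [AddCommGroup M] (g : ℕ → M) (m k : ℕ) :
    ∑ i ∈ range m, (g (i + k) - g i) = ∑ j ∈ range k, (g (m + j) - g j) := by
  induction m with
  | zero => simp
  | succ m ih =>
    have telescope := sum_range_sub (fun j => g (m + j)) k
    rw [add_zero] at telescope
    rw [sum_range_succ, ih, ← telescope, ← sum_add_distrib]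
    refine sum_congr rfl fun j _ => ?_
    rw [add_right_comm, add_assoc]
    abel

theorem one_div_sub_div_sq_le_one_div {p q : ℝ} (hp : 0 < p) (hq : 0 < q) :
    1 / p - (q - p) / p ^ 2 ≤ 1 / q := by
  have key : 1 / q - (1 / p - (q - p) / p ^ 2) = (q - p) ^ 2 / (q * p ^ 2) := by
    field_simp
    ring
  have : 0 ≤ (q - p) ^ 2 / (q * p ^ 2) := by positivity
  linarith

theorem sq_add_four_mul_sq_le {u v t : ℝ} (ht0 : 0 < t) (ht1 : t < 1) :
    (u + v) ^ 2 + 4 * (u - t * (u + v)) ^ 2 ≤ u ^ 2 / t + v ^ 2 / (1 - t) := by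
  have ht1' : 0 < 1 - t := sub_pos.2 ht1
  have key : u ^ 2 / t + v ^ 2 / (1 - t) - (u + v) ^ 2 =
      (u - t * (u + v)) ^ 2 / (t * (1 - t)) := by
    field_simp
    ring
  have : 4 * (u - t * (u + v)) ^ 2 ≤ (u - t * (u + v)) ^ 2 / (t * (1 - t)) := by
    rw [le_div_iff₀ (by positivity)]
    nlinarith [mul_nonneg (sq_nonneg (u - t * (u + v))) (sq_nonneg (2 * t - 1))]
  linarith

theorem half_le_abs_sub_mul_add {u v a b k t ε : ℝ} (ht0 : 0 ≤ t) (ht1 : t ≤ 1) (hk : 0 ≤ k)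
    (hkε : 4 * k ≤ ε * b) (hu : a - k ≤ u) (hu' : u ≤ a) (huv : b - 2 * k ≤ u + v)
    (huv' : u + v ≤ b) (hdev : ε * b ≤ |a - t * b|) : ε * b / 2 ≤ |u - t * (u + v)| := by
  have htk : t * k ≤ k := mul_le_of_le_one_left hk ht1
  rcases le_abs'.1 hdev with h | h
  · have := mul_le_mul_of_nonneg_left huv ht0
    exact le_abs'.2 (Or.inl (by linarith))
  · have := mul_le_mul_of_nonneg_left huv' ht0
    exact le_abs'.2 (Or.inr (by linarith))

theorem StrictMonoOn.sq_div_le_sum_one_div_sub {n a m k : ℕ} {X : ℕ → ℝ}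
    (hX : StrictMonoOn X (Set.Iio n)) (hk : 0 < k) (hm : 0 < m) (hamk : a + m + k ≤ n) {S : ℝ}
    (hS : X (a + m + k - 1) - X a ≤ S) :
    (m : ℝ) ^ 2 / (k * S) ≤ ∑ i ∈ range m, 1 / (X (a + i + k) - X (a + i)) := by
  have hpos : ∀ i ∈ range m, 0 < X (a + i + k) - X (a + i) := fun i hi => by
    rw [mem_range] at hi
    exact sub_pos.2 (hX (Set.mem_Iio.2 (by omega)) (Set.mem_Iio.2 (by omega)) (by omega))
  have hsum : ∑ i ∈ range m, (X (a + i + k) - X (a + i)) ≤ k * S := by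
    calc _ = ∑ j ∈ range k, (X (a + (m + j)) - X (a + j)) := by
          simpa only [add_assoc] using sum_range_add_sub_swap (fun i => X (a + i)) m k
      _ ≤ ∑ j ∈ range k, (X (a + m + k - 1) - X a) := sum_le_sum fun j hj => by
          rw [mem_range] at hj
          refine sub_le_sub (hX.monotoneOn ?_ ?_ ?_) (hX.monotoneOn ?_ ?_ ?_) <;>
            (try simp only [Set.mem_Iio]) <;> omega
      _ ≤ k * S := by
          rw [sum_const, card_range, nsmul_eq_mul]
          exact mul_le_mul_of_nonneg_left hS k.cast_nonneg
  calc (m : ℝ) ^ 2 / (k * S) ≤ (m : ℝ) ^ 2 / ∑ i ∈ range m, (X (a + i + k) - X (a + i)) :=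
        div_le_div_of_nonneg_left (sq_nonneg _) (sum_pos hpos (nonempty_range_iff.2 hm.ne')) hsum
    _ ≤ _ := by simpa using sq_sum_div_le_sum_sq_div (range m) (fun _ => (1 : ℝ)) hpos

namespace Needle

-- Configurations are indexed by `ℕ` (values from `n` on are irrelevant), so that the index shifts
-- `i + k` below need no `Fin` arithmetic.
structure IsEquilibrium_s12 (n : ℕ) (X : ℕ → ℝ) : Prop where
  strictMonoOn : StrictMonoOn X (Set.Iio n)
  map_zero : X 0 = 0
  map_last : X (n - 1) = 1
  balanced : ∀ m, 0 < m → m < n - 1 →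
    ∑ i ∈ range m, 1 / (X m - X i) ^ 2 = ∑ j ∈ Ioo m n, 1 / (X j - X m) ^ 2

noncomputable def energy (n : ℕ) (X : ℕ → ℝ) : ℝ :=
  ∑ j ∈ range n, ∑ i ∈ range j, 1 / (X j - X i)

noncomputable def shiftEnergy (n : ℕ) (X : ℕ → ℝ) (k : ℕ) : ℝ :=
  ∑ i ∈ range (n - k), 1 / (X (i + k) - X i)

theorem energy_eq_sum_shiftEnergy (n : ℕ) (X : ℕ → ℝ) :
    energy n X = ∑ k ∈ Ico 1 n, shiftEnergy n X k :=
  sum_range_sum_range_eq_sum_Ico_sum_range n fun i j => 1 / (X j - X i)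

noncomputable def uniform (n i : ℕ) : ℝ := i / ((n : ℝ) - 1)

theorem strictMono_uniform {n : ℕ} (hn : 1 < n) : StrictMono (uniform n) := fun _ _ hij =>
  div_lt_div_of_pos_right (Nat.cast_lt.2 hij) (sub_pos.2 (Nat.one_lt_cast.2 hn))

theorem uniform_last {n : ℕ} (hn : 1 < n) : uniform n (n - 1) = 1 := by
  rw [uniform, Nat.cast_sub hn.le, Nat.cast_one, div_self (sub_pos.2 (Nat.one_lt_cast.2 hn)).ne']

theorem shiftEnergy_uniform (n k : ℕ) :
    shiftEnergy n (uniform n) k = (n - k : ℕ) * ((n - 1) / k) := by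
  simp only [shiftEnergy, uniform, ← sub_div, Nat.cast_add, add_sub_cancel_left, one_div_div,
    sum_const, card_range, nsmul_eq_mul]

theorem shiftEnergy_uniform_le_sq_div_add {n k : ℕ} (hk : 0 < k) (hkn : k < n) :
    shiftEnergy n (uniform n) k ≤ ((n - k : ℕ) : ℝ) ^ 2 / k + n := by
  have hk' : (0 : ℝ) < k := Nat.cast_pos.2 hk
  have hkn' : (k : ℝ) < n := Nat.cast_lt.2 hkn
  rw [shiftEnergy_uniform, Nat.cast_sub hkn.le, ← sub_nonneg]
  have key : ((n : ℝ) - k) ^ 2 / k + n - (n - k) * ((n - 1) / k) = (n - k + k ^ 2) / k := by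
    field_simp
    ring
  rw [key]
  exact div_nonneg (by nlinarith) hk'.le

theorem shiftEnergy_uniform_le_sq_sub_div_add {n k : ℕ} (hk : 0 < k) (hkn : k < n) :
    shiftEnergy n (uniform n) k ≤ ((n : ℝ) - 2 * k) ^ 2 / k + 3 * n := by
  have hk' : (0 : ℝ) < k := Nat.cast_pos.2 hk
  have hkn' : (k : ℝ) < n := Nat.cast_lt.2 hkn
  rw [shiftEnergy_uniform, Nat.cast_sub hkn.le, ← sub_nonneg]
  have key : ((n : ℝ) - 2 * k) ^ 2 / k + 3 * n - (n - k) * ((n - 1) / k) =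
      (4 * k ^ 2 + n - k) / k := by
    field_simp
    ring
  rw [key]
  exact div_nonneg (by nlinarith) hk'.le

namespace IsEquilibrium_s12

variable {n : ℕ} {X : ℕ → ℝ}

theorem of_needleEquilibrium {x : Fin n → ℝ} (hn : 0 < n) (h : needleEquilibrium n x) :
    IsEquilibrium_s12 n (Function.extend Fin.val x 0) := by
  obtain ⟨hmono, h0, h1, hbal⟩ := h
  set X := Function.extend Fin.val x 0
  have hX : ∀ i : Fin n, X i = x i := Fin.val_injective.extend_apply x 0
  refine ⟨fun i hi j hj hij => ?_, ?_, ?_, fun m hm0 hm => ?_⟩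
  · rw [← Fin.val_mk hi, ← Fin.val_mk hj, hX, hX]
    exact hmono hij
  · rw [← Fin.val_mk hn, hX, h0 _ rfl]
  · rw [← Fin.val_mk (Nat.sub_lt hn one_pos), hX, h1 _ rfl]
  · obtain ⟨i, rfl⟩ : ∃ i : Fin n, i.val = m := ⟨⟨m, by omega⟩, rfl⟩
    have hb := hbal i hm0 (by omega)
    rw [filter_gt_eq_Iio, filter_lt_eq_Ioi] at hb
    rw [← Nat.Iio_eq_range, ← Fin.map_valEmbedding_Iio, ← Fin.map_valEmbedding_Ioi, sum_map,
      sum_map]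
    simp only [Fin.valEmbedding_apply, hX, hb]
    exact sum_congr rfl fun j _ => by rw [sub_sq_comm]

theorem two_le (hX : IsEquilibrium_s12 n X) : 2 ≤ n := by
  by_contra! hn
  have h := hX.map_last
  rw [show n - 1 = 0 by omega, hX.map_zero] at h
  exact zero_ne_one h

theorem sum_sum_sub_div_sq_eq_zero (hX : IsEquilibrium_s12 n X) {D : ℕ → ℝ} (hD0 : D 0 = 0)
    (hD1 : D (n - 1) = 0) :
    ∑ j ∈ range n, ∑ i ∈ range j, (D j - D i) / (X j - X i) ^ 2 = 0 := by
  calc _ = ∑ j ∈ range n, D j * ∑ i ∈ range j, 1 / (X j - X i) ^ 2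
        - ∑ j ∈ range n, ∑ i ∈ range j, D i * (1 / (X j - X i) ^ 2) := by
        rw [← sum_sub_distrib]
        refine sum_congr rfl fun j _ => ?_
        rw [mul_sum, ← sum_sub_distrib]
        exact sum_congr rfl fun i _ => by ring
    _ = ∑ m ∈ range n, D m *
          (∑ i ∈ range m, 1 / (X m - X i) ^ 2 - ∑ j ∈ Ioo m n, 1 / (X j - X m) ^ 2) := by
        simp only [sum_range_sum_range_eq_sum_range_sum_Ioo n
          (fun i j => D i * (1 / (X j - X i) ^ 2)), ← mul_sum, ← sum_sub_distrib, mul_sub]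
    _ = 0 := sum_eq_zero fun m hm => by
        obtain rfl | hm0 := Nat.eq_zero_or_pos m
        · rw [hD0, zero_mul]
        obtain rfl | hm1 := eq_or_ne m (n - 1)
        · rw [hD1, zero_mul]
        rw [hX.balanced m hm0 (by have := mem_range.1 hm; omega), sub_self, mul_zero]

theorem energy_le (hX : IsEquilibrium_s12 n X) {Y : ℕ → ℝ} (hY : StrictMonoOn Y (Set.Iio n))
    (hY0 : Y 0 = 0) (hY1 : Y (n - 1) = 1) : energy n X ≤ energy n Y := by
  have hvar := hX.sum_sum_sub_div_sq_eq_zero (D := fun i => Y i - X i)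
    (by rw [hY0, hX.map_zero, sub_zero]) (by rw [hY1, hX.map_last, sub_self])
  calc energy n X = ∑ j ∈ range n, ∑ i ∈ range j,
        (1 / (X j - X i) - ((Y j - X j) - (Y i - X i)) / (X j - X i) ^ 2) := by
        simp only [sum_sub_distrib, hvar, sub_zero, energy]
    _ ≤ energy n Y := sum_le_sum fun j hj => sum_le_sum fun i hi => by
        simp only [mem_range] at hi hj
        have hij := one_div_sub_div_sq_le_one_div
          (sub_pos.2 (hX.strictMonoOn (hi.trans hj) hj hi)) (sub_pos.2 (hY (hi.trans hj) hj hi))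
        rwa [show Y j - X j - (Y i - X i) = Y j - Y i - (X j - X i) by ring]

theorem sum_shiftEnergy_le_sum_shiftEnergy_uniform (hX : IsEquilibrium_s12 n X) :
    ∑ k ∈ Ico 1 n, shiftEnergy n X k ≤ ∑ k ∈ Ico 1 n, shiftEnergy n (uniform n) k := by
  simpa only [energy_eq_sum_shiftEnergy] using hX.energy_le
    ((strictMono_uniform hX.two_le).strictMonoOn _) (by simp [uniform]) (uniform_last hX.two_le)

theorem sq_div_le_shiftEnergy (hX : IsEquilibrium_s12 n X) {k : ℕ} (hk : 0 < k) (hkn : k < n) :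
    ((n - k : ℕ) : ℝ) ^ 2 / k ≤ shiftEnergy n X k := by
  have hS : X (0 + (n - k) + k - 1) - X 0 ≤ 1 := by
    rw [show 0 + (n - k) + k - 1 = n - 1 by omega, hX.map_last, hX.map_zero, sub_zero]
  simpa only [shiftEnergy, zero_add, mul_one] using
    hX.strictMonoOn.sq_div_le_sum_one_div_sub hk (Nat.sub_pos_of_lt hkn) (by omega) hS

theorem sq_div_add_sq_div_le_shiftEnergy (hX : IsEquilibrium_s12 n X) {t : ℝ} {N : ℕ}
    (hN : ∀ i < n, i < N ↔ X i ≤ t) (hNn : N ≤ n) {k : ℕ} (hk : 0 < k) :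
    ((N - k : ℕ) : ℝ) ^ 2 / (k * t) + ((n - k - N : ℕ) : ℝ) ^ 2 / (k * (1 - t)) ≤
      shiftEnergy n X k := by
  set f : ℕ → ℝ := fun i => 1 / (X (i + k) - X i)
  have hf : ∀ i, i + k < n → 0 ≤ f i := fun i hi =>
    one_div_nonneg.2 (sub_nonneg.2 (hX.strictMonoOn.monotoneOn (Set.mem_Iio.2 (by omega))
      (Set.mem_Iio.2 hi) (by omega)))
  have hA : ((N - k : ℕ) : ℝ) ^ 2 / (k * t) ≤ ∑ i ∈ range (N - k), f i := by
    rcases Nat.eq_zero_or_pos (N - k) with h | h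
    · simp [h]
    have hS : X (0 + (N - k) + k - 1) - X 0 ≤ t := by
      rw [show 0 + (N - k) + k - 1 = N - 1 by omega, hX.map_zero, sub_zero]
      exact (hN _ (by omega)).1 (by omega)
    simpa only [zero_add] using hX.strictMonoOn.sq_div_le_sum_one_div_sub hk h (by omega) hS
  have hB : ((n - k - N : ℕ) : ℝ) ^ 2 / (k * (1 - t)) ≤ ∑ i ∈ range (n - k - N), f (N + i) := by
    rcases Nat.eq_zero_or_pos (n - k - N) with h | h
    · simp [h]
    have hXN : t < X N := not_le.1 fun hle => lt_irrefl N ((hN N (by omega)).2 hle)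
    have hS : X (N + (n - k - N) + k - 1) - X N ≤ 1 - t := by
      rw [show N + (n - k - N) + k - 1 = n - 1 by omega, hX.map_last]
      linarith
    exact hX.strictMonoOn.sq_div_le_sum_one_div_sub hk h (by omega) hS
  rcases le_or_gt N (n - k) with hNk | hNk
  · have hsplit := sum_range_add f N (n - k - N)
    rw [Nat.add_sub_cancel' hNk] at hsplit
    rw [shiftEnergy, hsplit]
    refine add_le_add (hA.trans (sum_le_sum_of_subset_of_nonneg (range_subset_range.2 (by omega))
      fun i hi _ => hf i (by have := mem_range.1 hi; omega))) hB
  · rw [show n - k - N = 0 by omega, Nat.cast_zero, zero_pow two_ne_zero, zero_div, add_zero]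
    exact hA.trans (sum_le_sum_of_subset_of_nonneg (range_subset_range.2 (by omega))
      fun i hi _ => hf i (by have := mem_range.1 hi; omega))

theorem sq_sub_add_sq_div_le_shiftEnergy (hX : IsEquilibrium_s12 n X) {t : ℝ} (ht : t ∈ Set.Ioo 0 1)
    {N : ℕ} (hN : ∀ i < n, i < N ↔ X i ≤ t) (hNn : N ≤ n) {ε : ℝ} (hε1 : ε ≤ 1) {k : ℕ}
    (hk : 0 < k) (hkε : 4 * k ≤ ε * n) (hdev : ε ≤ |(N : ℝ) / n - t|) :
    (((n : ℝ) - 2 * k) ^ 2 + ε ^ 2 * n ^ 2) / k ≤ shiftEnergy n X k := by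
  have hn : (0 : ℝ) < n := Nat.cast_pos.2 (zero_lt_two.trans_le hX.two_le)
  have hk' : (0 : ℝ) < k := Nat.cast_pos.2 hk
  have hu : (N : ℝ) - k ≤ (N - k : ℕ) := by
    rw [sub_le_iff_le_add]
    exact_mod_cast (show N ≤ N - k + k by omega)
  have hu' : ((N - k : ℕ) : ℝ) ≤ N := Nat.cast_le.2 (Nat.sub_le N k)
  have huv : (n : ℝ) - 2 * k ≤ (N - k : ℕ) + (n - k - N : ℕ) := by
    rw [sub_le_iff_le_add]
    exact_mod_cast (show n ≤ N - k + (n - k - N) + 2 * k by omega)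
  have huv' : ((N - k : ℕ) : ℝ) + (n - k - N : ℕ) ≤ n := by
    exact_mod_cast (show N - k + (n - k - N) ≤ n by omega)
  set u : ℝ := ((N - k : ℕ) : ℝ)
  set v : ℝ := ((n - k - N : ℕ) : ℝ)
  rw [show (N : ℝ) / n - t = (N - t * n) / n by field_simp, abs_div, abs_of_pos hn,
    le_div_iff₀ hn] at hdev
  have hdev' := half_le_abs_sub_mul_add ht.1.le ht.2.le hk'.le hkε hu hu' huv huv' hdev
  have hεn : 0 ≤ ε * n / 2 := by linarith
  have h2k : 0 ≤ (n : ℝ) - 2 * k := by nlinarith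
  calc (((n : ℝ) - 2 * k) ^ 2 + ε ^ 2 * n ^ 2) / k
      ≤ ((u + v) ^ 2 + 4 * (u - t * (u + v)) ^ 2) / k := by
        refine div_le_div_of_nonneg_right ?_ hk'.le
        have h1 := pow_le_pow_left₀ h2k huv 2
        have h2 := pow_le_pow_left₀ hεn hdev' 2
        rw [sq_abs] at h2
        nlinarith
    _ ≤ (u ^ 2 / t + v ^ 2 / (1 - t)) / k :=
        div_le_div_of_nonneg_right (sq_add_four_mul_sq_le ht.1 ht.2) hk'.le
    _ = u ^ 2 / (k * t) + v ^ 2 / (k * (1 - t)) := by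
        rw [add_div, div_div, div_div, mul_comm t, mul_comm (1 - t)]
    _ ≤ shiftEnergy n X k := hX.sq_div_add_sq_div_le_shiftEnergy hN hNn hk

theorem abs_div_sub_lt_of_mem_Ioo (hX : IsEquilibrium_s12 n X) {t : ℝ} (ht : t ∈ Set.Ioo 0 1)
    {N : ℕ} (hN : ∀ i < n, i < N ↔ X i ≤ t) (hNn : N ≤ n) {ε : ℝ} (hε1 : ε ≤ 1) {K : ℕ}
    (hKε : 4 * K ≤ ε * n) (hH : 3 ≤ ε ^ 2 * ∑ k ∈ range K, 1 / ((k : ℝ) + 1)) :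
    |(N : ℝ) / n - t| < ε := by
  by_contra! hdev
  have hn : (0 : ℝ) < n := Nat.cast_pos.2 (zero_lt_two.trans_le hX.two_le)
  have hKn : K < n := by
    have : (K : ℝ) < n := by nlinarith
    exact_mod_cast this
  set d : ℕ → ℝ := fun k => shiftEnergy n X k + 3 * n - shiftEnergy n (uniform n) k
  have hd : ∀ k ∈ Ico 1 n, 0 ≤ d k := fun k hk => by
    rw [mem_Ico] at hk
    have h1 := shiftEnergy_uniform_le_sq_div_add hk.1 hk.2
    have h2 := hX.sq_div_le_shiftEnergy hk.1 hk.2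
    simp only [d]
    linarith
  have hdK : ∀ k ∈ range K, ε ^ 2 * n ^ 2 * (1 / ((k : ℝ) + 1)) ≤ d (1 + k) := fun k hk => by
    rw [mem_range] at hk
    have h1 := shiftEnergy_uniform_le_sq_sub_div_add (n := n) (k := 1 + k) (by omega) (by omega)
    have hkε : 4 * ((1 + k : ℕ) : ℝ) ≤ ε * n := le_trans (by norm_cast; omega) hKε
    have h2 := hX.sq_sub_add_sq_div_le_shiftEnergy ht hN hNn hε1 (by omega) hkε hdev
    rw [add_div] at h2
    have hk1 : ε ^ 2 * n ^ 2 * (1 / ((k : ℝ) + 1)) = ε ^ 2 * n ^ 2 / ((1 + k : ℕ) : ℝ) := by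
      push_cast
      ring
    simp only [d, hk1]
    linarith
  have hsum : ∑ k ∈ Ico 1 n, d k ≤ 3 * n * (n - 1) := by
    have := hX.sum_shiftEnergy_le_sum_shiftEnergy_uniform
    simp only [d, sum_sub_distrib, sum_add_distrib, sum_const, Nat.card_Ico, nsmul_eq_mul,
      Nat.cast_sub (show 1 ≤ n by omega), Nat.cast_one]
    linarith
  have hlow : ε ^ 2 * n ^ 2 * ∑ k ∈ range K, 1 / ((k : ℝ) + 1) ≤ ∑ k ∈ Ico 1 n, d k := by
    rw [mul_sum, sum_Ico_eq_sum_range]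
    exact (sum_le_sum hdK).trans (sum_le_sum_of_subset_of_nonneg
      (range_subset_range.2 (by omega)) fun k hk _ =>
        hd _ (mem_Ico.2 (by have := mem_range.1 hk; omega)))
  nlinarith

theorem abs_div_sub_lt (hX : IsEquilibrium_s12 n X) {t : ℝ} (ht : t ∈ Set.Icc 0 1)
    {N : ℕ} (hN : ∀ i < n, i < N ↔ X i ≤ t) (hNn : N ≤ n) {ε : ℝ} (hε1 : ε ≤ 1) {K : ℕ}
    (hKε : 4 * K ≤ ε * n) (hH : 3 ≤ ε ^ 2 * ∑ k ∈ range K, 1 / ((k : ℝ) + 1)) :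
    |(N : ℝ) / n - t| < ε := by
  have hn := hX.two_le
  have hn' : (0 : ℝ) < n := Nat.cast_pos.2 (by omega)
  have hK : 1 ≤ K := Nat.one_le_iff_ne_zero.2 fun hK => by simp [hK] at hH; linarith
  have hεn : 4 ≤ ε * n := le_trans (by norm_cast; omega) hKε
  rcases ht.1.eq_or_lt with rfl | ht0
  · have hN1 : N = 1 := by
      have h0 := (hN 0 (by omega)).2 hX.map_zero.le
      have h1 := (hN 1 (by omega)).not.2 (not_le.2 (hX.map_zero ▸ hX.strictMonoOn
        (Set.mem_Iio.2 (by omega)) (Set.mem_Iio.2 (by omega)) one_pos))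
      omega
    rw [hN1, Nat.cast_one, sub_zero, abs_of_pos (by positivity), div_lt_iff₀ hn']
    linarith
  rcases ht.2.eq_or_lt with rfl | ht1
  · have hNn' : N = n := by
      have := (hN (n - 1) (by omega)).2 hX.map_last.le
      omega
    rw [hNn', div_self hn'.ne', sub_self, abs_zero]
    nlinarith
  exact hX.abs_div_sub_lt_of_mem_Ioo ⟨ht0, ht1⟩ hN hNn hε1 hKε hH

end IsEquilibrium_s12

theorem abs_card_filter_div_sub_lt {n : ℕ} {x : Fin n → ℝ} (hn : 0 < n)
    (hx : needleEquilibrium n x) {t : ℝ} (ht : t ∈ Set.Icc 0 1) {ε : ℝ} (hε1 : ε ≤ 1) {K : ℕ} (hKε : 4 * K ≤ ε * n)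
    (hH : 3 ≤ ε ^ 2 * ∑ k ∈ range K, 1 / ((k : ℝ) + 1)) :
    |((univ.filter fun i : Fin n => x i ≤ t).card : ℝ) / n - t| < ε := by
  have hN : ∀ i < n, i < (univ.filter fun i : Fin n => x i ≤ t).card ↔
      Function.extend Fin.val x 0 i ≤ t := fun i hi => by
    rw [← Fin.val_mk hi, Fin.val_injective.extend_apply]
    exact Tuple.lt_card_le_iff_apply_le_of_monotone hx.1.monotone
  exact (IsEquilibrium_s12.of_needleEquilibrium hn hx).abs_div_sub_lt ht hN
    ((card_le_univ _).trans_eq (Fintype.card_fin n)) hε1 hKε hH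

end Needle

open Filter in
/-- For each `n ≥ 3` let `x^{(n)}` be the configuration of `n` charges at equilibrium
on `[0,1]`, and let `F_n(t) = (1/n)·card{i : x^{(n)}_i ≤ t}` be its distribution function.
Then `(F_n)` converges uniformly on `[0,1]` to the distribution function `G(t) = t` of the
uniform density; in particular `F_n(t) → t` for every `t ∈ [0,1]`. -/
theorem needleEquilibrium_cdf_tendsto_uniform (x : (n : ℕ) → Fin n → ℝ)
    (hx : ∀ n, 3 ≤ n → needleEquilibrium n (x n)) :
    TendstoUniformlyOn
      (fun (n : ℕ) (t : ℝ) =>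
        ((Finset.univ.filter fun i : Fin n => x n i ≤ t).card : ℝ) / n)
      (fun t => t) atTop (Set.Icc 0 1) ∧
      ∀ t ∈ Set.Icc (0 : ℝ) 1,
        Tendsto (fun n : ℕ =>
            ((Finset.univ.filter fun i : Fin n => x n i ≤ t).card : ℝ) / n)
          atTop (nhds t) := by
  refine (fun h => ⟨h, fun t ht => h.tendsto_at ht⟩)
    (Metric.tendstoUniformlyOn_iff.2 fun ε hε => ?_)
  obtain ⟨K, hK⟩ : ∃ K : ℕ, 3 ≤ min ε 1 ^ 2 * ∑ k ∈ range K, 1 / ((k : ℝ) + 1) :=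
    ((Real.tendsto_sum_range_one_div_nat_succ_atTop.const_mul_atTop
      (by positivity)).eventually_ge_atTop 3).exists
  filter_upwards [eventually_ge_atTop 3, (tendsto_natCast_atTop_atTop.const_mul_atTop
    (lt_min hε one_pos)).eventually_ge_atTop (4 * K : ℝ)] with n hn hnK t ht
  rw [dist_comm, Real.dist_eq]
  exact (Needle.abs_card_filter_div_sub_lt (by omega) (hx n hn) ht (min_le_right _ _) hnK
    hK).trans_le (min_le_left _ _)
end

section
/- Along the first-order dynamics the interaction energy decreases: let n ≥ 4 and let x : [0,∞) → ℝⁿ be such that x_1(t) = 0 and x_n(t) = 1 for all t, x_1(t) < x_2(t) < ⋯ < x_n(t) for all t, each x_i (2 ≤ i ≤ n−1) is differentiable, and for all t ≥ 0 and 2 ≤ i ≤ n−1, x_i′(t) = ∑_{j=1}^{i−1} 1/(x_i(t) − x_j(t))² − ∑_{j=i+1}^{n} 1/(x_i(t) − x_j(t))². Then the function t ↦ ∑_{1 ≤ j < k ≤ n} 1/(x_k(t) − x_j(t)) is nonincreasing on [0,∞). -/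
/-!
The interior coordinates follow the gradient flow `x' = F(x)` of the energy
`E(x) = ∑_{j<k} 1/(x_k - x_j)`, where `F = -∇E` is the net pairwise force, while the two endpoints
are pinned. Hence `dE/dt = -∑_i x_i' F_i(x)` is minus the sum of `F_i(x)²` over the interior
coordinates, which is nonpositive.
-/

open Finset

section PairInteraction

variable {ι : Type*} [Fintype ι] [LinearOrder ι]

/-- Summation by parts over ordered pairs. -/
theorem sum_pairs_lt_sub_mul_eq_sum_mul {R : Type*} [Ring R] (v : ι → R) (a : ι → ι → R) :
    ∑ p ∈ univ.filter (fun p : ι × ι => p.1 < p.2), (v p.2 - v p.1) * a p.1 p.2 =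
      ∑ i, v i * (∑ j ∈ univ.filter (· < i), a j i - ∑ k ∈ univ.filter (i < ·), a i k) := by
  have split (j k : ι) : (if j < k then (v k - v j) * a j k else 0) =
      (if j < k then v k * a j k else 0) - (if j < k then v j * a j k else 0) := by
    split_ifs <;> simp only [sub_mul, sub_zero]
  simp only [sum_filter, Fintype.sum_prod_type, split, sum_sub_distrib, mul_sub, mul_sum,
    mul_ite, mul_zero]
  rw [sum_comm]

noncomputable def pairEnergy (y : ι → ℝ) : ℝ :=
  ∑ p ∈ univ.filter (fun p : ι × ι => p.1 < p.2), 1 / (y p.2 - y p.1)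

/-- `pairForce y = -∇ pairEnergy y`. -/
noncomputable def pairForce (y : ι → ℝ) (i : ι) : ℝ :=
  ∑ j ∈ univ.filter (· < i), 1 / (y i - y j) ^ 2 - ∑ j ∈ univ.filter (i < ·), 1 / (y i - y j) ^ 2

theorem pairForce_eq (y : ι → ℝ) (i : ι) :
    pairForce y i = ∑ j ∈ univ.filter (· < i), 1 / (y i - y j) ^ 2 -
      ∑ k ∈ univ.filter (i < ·), 1 / (y k - y i) ^ 2 := by
  unfold pairForce
  congr 1
  exact sum_congr rfl fun k _ => by ring

theorem hasDerivWithinAt_pairEnergy {y : ℝ → ι → ℝ} {v : ι → ℝ} {s : Set ℝ} {t : ℝ}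
    (hy : StrictMono (y t)) (hv : ∀ i, HasDerivWithinAt (fun u => y u i) (v i) s t) :
    HasDerivWithinAt (fun u => pairEnergy (y u)) (-∑ i, v i * pairForce (y t) i) s t := by
  have hsum : HasDerivWithinAt (fun u => pairEnergy (y u))
      (∑ p ∈ univ.filter (fun p : ι × ι => p.1 < p.2),
        -(v p.2 - v p.1) / (y t p.2 - y t p.1) ^ 2) s t := by
    simp only [pairEnergy, one_div]
    exact HasDerivWithinAt.fun_sum fun p hp =>
      ((hv p.2).sub (hv p.1)).inv (sub_ne_zero.2 (hy (mem_filter.1 hp).2).ne')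
  convert hsum using 1
  simp only [pairForce_eq, ← sum_pairs_lt_sub_mul_eq_sum_mul, ← sum_neg_distrib]
  exact sum_congr rfl fun p _ => by ring

end PairInteraction

theorem energy_antitone_along_first_order_flow_general (n : ℕ)
    (x : ℝ → Fin n → ℝ)
    (h0 : ∀ t ∈ Set.Ici (0 : ℝ), ∀ i : Fin n, i.val = 0 → x t i = 0)
    (h1 : ∀ t ∈ Set.Ici (0 : ℝ), ∀ i : Fin n, i.val = n - 1 → x t i = 1)
    (hmono : ∀ t ∈ Set.Ici (0 : ℝ), StrictMono (x t))
    (hode : ∀ t ∈ Set.Ici (0 : ℝ), ∀ i : Fin n, 1 ≤ i.val → i.val ≤ n - 2 →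
      HasDerivWithinAt (fun s => x s i)
        ((∑ j ∈ Finset.univ.filter (fun j => j < i), 1 / (x t i - x t j) ^ 2) -
          ∑ j ∈ Finset.univ.filter (fun j => i < j), 1 / (x t i - x t j) ^ 2)
        (Set.Ici 0) t) :
    AntitoneOn
      (fun t => ∑ p ∈ Finset.univ.filter (fun p : Fin n × Fin n => p.1 < p.2),
        1 / (x t p.2 - x t p.1))
      (Set.Ici 0) := by
  let vel (t : ℝ) (i : Fin n) : ℝ := if 1 ≤ i.val ∧ i.val ≤ n - 2 then pairForce (x t) i else 0
  have hvel : ∀ t ∈ Set.Ici (0 : ℝ), ∀ i,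
      HasDerivWithinAt (fun s => x s i) (vel t i) (Set.Ici 0) t := by
    intro t ht i
    by_cases hi : 1 ≤ i.val ∧ i.val ≤ n - 2
    · simpa only [vel, if_pos hi, pairForce] using hode t ht i hi.1 hi.2
    · simp only [vel, if_neg hi]
      obtain hi0 | hi1 : i.val = 0 ∨ i.val = n - 1 := by omega
      · exact (hasDerivWithinAt_const t _ 0).congr (fun s hs => h0 s hs i hi0) (h0 t ht i hi0)
      · exact (hasDerivWithinAt_const t _ 1).congr (fun s hs => h1 s hs i hi1) (h1 t ht i hi1)
  have hdissipation (t : ℝ) (i : Fin n) : 0 ≤ vel t i * pairForce (x t) i := by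
    simp only [vel]
    split_ifs
    exacts [mul_self_nonneg _, (zero_mul _).ge]
  have henergy (t : ℝ) (ht : t ∈ Set.Ici 0) :=
    hasDerivWithinAt_pairEnergy (hmono t ht) (hvel t ht)
  exact antitoneOn_of_hasDerivWithinAt_nonpos (convex_Ici 0)
    (fun t ht => (henergy t ht).continuousWithinAt)
    (fun t ht => (henergy t (interior_subset ht)).mono interior_subset)
    (fun t _ => neg_nonpos.2 (sum_nonneg fun i _ => hdissipation t i))

/-- Along the first-order dynamics the interaction energy decreases: if `x_1 ≡ 0`,
`x_n ≡ 1`, the coordinates stay strictly increasing, and every interior coordinate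
satisfies `x_i' = ∑_{j<i} 1/(x_i - x_j)² − ∑_{j>i} 1/(x_i - x_j)²` on `[0,∞)`, then
`t ↦ ∑_{j<k} 1/(x_k(t) - x_j(t))` is nonincreasing on `[0,∞)`. -/
theorem energy_antitone_along_first_order_flow (n : ℕ) (hn : 4 ≤ n)
    (x : ℝ → Fin n → ℝ)
    (h0 : ∀ t ∈ Set.Ici (0 : ℝ), ∀ i : Fin n, i.val = 0 → x t i = 0)
    (h1 : ∀ t ∈ Set.Ici (0 : ℝ), ∀ i : Fin n, i.val = n - 1 → x t i = 1)
    (hmono : ∀ t ∈ Set.Ici (0 : ℝ), StrictMono (x t))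
    (hode : ∀ t ∈ Set.Ici (0 : ℝ), ∀ i : Fin n, 1 ≤ i.val → i.val ≤ n - 2 →
      HasDerivWithinAt (fun s => x s i)
        ((∑ j ∈ Finset.univ.filter (fun j => j < i), 1 / (x t i - x t j) ^ 2) -
          ∑ j ∈ Finset.univ.filter (fun j => i < j), 1 / (x t i - x t j) ^ 2)
        (Set.Ici 0) t) :
    AntitoneOn
      (fun t => ∑ p ∈ Finset.univ.filter (fun p : Fin n × Fin n => p.1 < p.2),
        1 / (x t p.2 - x t p.1))
      (Set.Ici 0) :=
  energy_antitone_along_first_order_flow_general n x h0 h1 hmono hode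
end

section
/- Let s ≥ 1 be an integer and q an integer with 0 < q < 2^s, and set x = q/2^s. Then the normalized one-sided force on the charge at x under the uniform discrete arrangement tends to infinity: the sequence n ↦ (1/(2^n + 1)) · ∑_{k=0}^{q·2^{n−s} − 1} 1/(x − k/2^n)², defined for n ≥ s, tends to +∞ as n → ∞. -/
open Filter Finset

/-!
The charge nearest to `x` on its left sits at distance `1/2^n`, so it alone contributes `4^n`
to the sum, and `4^n / (2^n + 1) ≥ 2^n / 2 → ∞`.
-/

lemma sq_le_sum_one_div_sq_sub_div {N : ℕ} (hN : N ≠ 0) (m : ℝ) :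
    m ^ 2 ≤ ∑ k ∈ range N, 1 / ((N : ℝ) / m - (k : ℝ) / m) ^ 2 := by
  have hlast : 1 / ((N : ℝ) / m - ((N - 1 : ℕ) : ℝ) / m) ^ 2 = m ^ 2 := by
    rw [← sub_div, Nat.cast_pred (Nat.pos_of_ne_zero hN), sub_sub_cancel, div_pow, one_pow,
      one_div_one_div]
  rw [← hlast]
  exact single_le_sum (f := fun k : ℕ => 1 / ((N : ℝ) / m - (k : ℝ) / m) ^ 2)
    (fun _ _ => by positivity) (mem_range.2 (Nat.pred_lt hN))

lemma half_le_sq_div_add_one {a : ℝ} (ha : 1 ≤ a) : a / 2 ≤ a ^ 2 / (a + 1) := by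
  rw [div_le_div_iff₀ two_pos (by linarith)]
  nlinarith

lemma natCast_div_two_pow_eq {s n : ℕ} (hsn : s ≤ n) (q : ℕ) :
    (q : ℝ) / 2 ^ s = ((q * 2 ^ (n - s) : ℕ) : ℝ) / 2 ^ n := by
  rw [← Nat.sub_add_cancel hsn, pow_add, Nat.add_sub_cancel]
  push_cast
  rw [mul_comm (2 ^ (n - s) : ℝ) _, mul_div_mul_right _ _ (by positivity)]

theorem one_sided_force_tendsto_atTop_general (s q : ℕ) (hq0 : 0 < q) :
    Tendsto (fun n : ℕ =>
        (1 / ((2 : ℝ) ^ n + 1)) *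
          ∑ k ∈ Finset.range (q * 2 ^ (n - s)),
            1 / ((q : ℝ) / 2 ^ s - (k : ℝ) / 2 ^ n) ^ 2)
      atTop atTop := by
  have hhalf : Tendsto (fun n : ℕ => (2 : ℝ) ^ n / 2) atTop atTop :=
    (tendsto_pow_atTop_atTop_of_one_lt one_lt_two).atTop_div_const two_pos
  refine tendsto_atTop_mono' atTop ?_ hhalf
  filter_upwards [eventually_ge_atTop s] with n hsn
  have hN : q * 2 ^ (n - s) ≠ 0 := by positivity
  calc (2 : ℝ) ^ n / 2 ≤ ((2 : ℝ) ^ n) ^ 2 / (2 ^ n + 1) :=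
        half_le_sq_div_add_one (one_le_pow₀ one_le_two)
    _ = 1 / ((2 : ℝ) ^ n + 1) * ((2 : ℝ) ^ n) ^ 2 := by ring
    _ ≤ _ := by
        rw [natCast_div_two_pow_eq hsn]
        gcongr
        exact sq_le_sum_one_div_sq_sub_div hN _

/-- Let `s ≥ 1`, `0 < q < 2^s`, `x = q/2^s`. Under the uniform discrete arrangement of
`2^n + 1` charges at the points `k/2^n` (`k = 0, …, 2^n`), each of charge `1/(2^n+1)`,
the normalized one-sided force on the charge at `x`,
`(1/(2^n+1)) · ∑_{k=0}^{q·2^{n-s}-1} 1/(x - k/2^n)²`, tends to `+∞` as `n → ∞`. -/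
theorem one_sided_force_tendsto_atTop (s q : ℕ) (hs : 1 ≤ s) (hq0 : 0 < q)
    (hq : q < 2 ^ s) :
    Tendsto (fun n : ℕ =>
        (1 / ((2 : ℝ) ^ n + 1)) *
          ∑ k ∈ Finset.range (q * 2 ^ (n - s)),
            1 / ((q : ℝ) / 2 ^ s - (k : ℝ) / 2 ^ n) ^ 2)
      atTop atTop :=
  one_sided_force_tendsto_atTop_general s q hq0
end

section
/- Let s ≥ 1 be an integer and q an integer with 0 < q < 2^s, and set x = q/2^s. Then the normalized total field at x under the uniform discrete arrangement converges to the continuous uniform field: as n → ∞, (1/(2^n + 1)) · ( ∑_{k=q·2^{n−s}+1}^{2^n} 1/(k/2^n − x)² − ∑_{k=0}^{q·2^{n−s}−1} 1/(x − k/2^n)² ) converges to 1/x − 1/(1−x), which equals (2x−1)/(x(x−1)). -/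
/-!
With `N = 2^n` and `m = x N`, the substitution `k = m ± j` turns both sums into
`N² · ∑_{j=1}^{M} 1/j²` with `M = N - m` and `M = m` respectively, so the field is
`N²/(N+1) · (S(N - m) - S(m))` for the partial sums `S = sumInvSq` of `∑ 1/j²`.
Comparing `1/j²` with `1/(j-1) - 1/j` and `1/j - 1/(j+1)` gives
`S b - S a = 1/a - 1/b + O(1/a² + 1/b²)`, and since `m` and `N - m` are proportional to `N`
the error term contributes `O(1/N)`, while `N · (1/m - 1/(N - m)) = 1/x - 1/(1-x)`.
-/

open Filter Topology

noncomputable def sumInvSq (N : ℕ) : ℝ := ∑ j ∈ Finset.range N, 1 / ((j : ℝ) + 1) ^ 2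

lemma sumInvSq_succ_sub (n : ℕ) : sumInvSq (n + 1) - sumInvSq n = 1 / ((n : ℝ) + 1) ^ 2 := by
  simp [sumInvSq, Finset.sum_range_succ]

lemma sumInvSq_sub_bounds {a b : ℕ} (ha : 1 ≤ a) (hab : a ≤ b) :
    1 / ((a : ℝ) + 1) - 1 / ((b : ℝ) + 1) ≤ sumInvSq b - sumInvSq a ∧
      sumInvSq b - sumInvSq a ≤ 1 / (a : ℝ) - 1 / (b : ℝ) := by
  induction b, hab using Nat.le_induction with
  | base => simp
  | succ n hn ih =>
    have hn1 : (1 : ℝ) ≤ n := by exact_mod_cast ha.trans hn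
    have lower : 1 / ((n : ℝ) + 1) - 1 / ((n : ℝ) + 1 + 1) ≤ 1 / ((n : ℝ) + 1) ^ 2 := by
      rw [div_sub_div _ _ (by positivity) (by positivity),
        div_le_div_iff₀ (by positivity) (by positivity)]
      nlinarith
    have upper : 1 / ((n : ℝ) + 1) ^ 2 ≤ 1 / (n : ℝ) - 1 / ((n : ℝ) + 1) := by
      rw [div_sub_div _ _ (by positivity) (by positivity),
        div_le_div_iff₀ (by positivity) (by positivity)]
      nlinarith
    have step := sumInvSq_succ_sub n
    push_cast
    constructor <;> linarith [ih.1, ih.2]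

lemma abs_sumInvSq_sub_sub_le_of_le {a b : ℕ} (ha : 1 ≤ a) (hab : a ≤ b) :
    |sumInvSq b - sumInvSq a - (1 / (a : ℝ) - 1 / (b : ℝ))| ≤ 1 / (a : ℝ) ^ 2 := by
  obtain ⟨lower, upper⟩ := sumInvSq_sub_bounds ha hab
  have ha1 : (1 : ℝ) ≤ a := by exact_mod_cast ha
  have hb1 : (1 : ℝ) ≤ b := by exact_mod_cast ha.trans hab
  have hb : 1 / ((b : ℝ) + 1) ≤ 1 / (b : ℝ) := one_div_le_one_div_of_le (by linarith) (by linarith)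
  have ha' : 1 / (a : ℝ) - 1 / ((a : ℝ) + 1) ≤ 1 / (a : ℝ) ^ 2 := by
    rw [div_sub_div _ _ (by positivity) (by positivity),
      div_le_div_iff₀ (by positivity) (by positivity)]
    nlinarith
  rw [abs_le]
  constructor <;> linarith

lemma abs_sumInvSq_sub_sub_le {a b : ℕ} (ha : 1 ≤ a) (hb : 1 ≤ b) :
    |sumInvSq b - sumInvSq a - (1 / (a : ℝ) - 1 / (b : ℝ))| ≤
      1 / (a : ℝ) ^ 2 + 1 / (b : ℝ) ^ 2 := by
  rcases le_total a b with hab | hba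
  · linarith [abs_sumInvSq_sub_sub_le_of_le ha hab, show 0 ≤ 1 / (b : ℝ) ^ 2 by positivity]
  · have reversed : sumInvSq b - sumInvSq a - (1 / (a : ℝ) - 1 / (b : ℝ)) =
        -(sumInvSq a - sumInvSq b - (1 / (b : ℝ) - 1 / (a : ℝ))) := by ring
    rw [reversed, abs_neg]
    linarith [abs_sumInvSq_sub_sub_le_of_le hb hba, show 0 ≤ 1 / (a : ℝ) ^ 2 by positivity]

lemma tendsto_mul_sumInvSq_sub {α β : ℝ} (hα : 0 < α) (hβ : 0 < β) {t : ℕ → ℝ}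
    (ht : Tendsto t atTop atTop) {a b : ℕ → ℕ} (ha : ∀ᶠ n in atTop, (a n : ℝ) = α * t n)
    (hb : ∀ᶠ n in atTop, (b n : ℝ) = β * t n) :
    Tendsto (fun n => t n * (sumInvSq (b n) - sumInvSq (a n))) atTop (𝓝 (1 / α - 1 / β)) := by
  rw [tendsto_iff_norm_sub_tendsto_zero]
  have hdecay : Tendsto (fun n => (1 / α ^ 2 + 1 / β ^ 2) * (t n)⁻¹) atTop (𝓝 0) := by
    simpa only [mul_zero, Function.comp_def] using
      (tendsto_inv_atTop_zero.comp ht).const_mul (1 / α ^ 2 + 1 / β ^ 2)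
  refine squeeze_zero_norm' ?_ hdecay
  filter_upwards [ha, hb, ht.eventually_gt_atTop 0] with n han hbn htn
  have ha1 : 1 ≤ a n := Nat.cast_pos.mp (by rw [han]; positivity)
  have hb1 : 1 ≤ b n := Nat.cast_pos.mp (by rw [hbn]; positivity)
  have hlimit : 1 / α - 1 / β = t n * (1 / (a n : ℝ) - 1 / (b n : ℝ)) := by
    rw [han, hbn]
    field_simp
  rw [norm_norm]
  calc ‖t n * (sumInvSq (b n) - sumInvSq (a n)) - (1 / α - 1 / β)‖
      = t n * |sumInvSq (b n) - sumInvSq (a n) - (1 / (a n : ℝ) - 1 / (b n : ℝ))| := by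
        rw [hlimit, ← mul_sub, Real.norm_eq_abs, abs_mul, abs_of_pos htn]
    _ ≤ t n * (1 / (a n : ℝ) ^ 2 + 1 / (b n : ℝ) ^ 2) := by
        gcongr
        exact abs_sumInvSq_sub_sub_le ha1 hb1
    _ = (1 / α ^ 2 + 1 / β ^ 2) * (t n)⁻¹ := by
        rw [han, hbn]
        field_simp

lemma sum_Icc_one_div_sub_sq {c y : ℝ} (hc : c ≠ 0) {m : ℕ} (hm : (m : ℝ) = y * c) (N : ℕ) :
    ∑ k ∈ Finset.Icc (m + 1) N, 1 / ((k : ℝ) / c - y) ^ 2 = c ^ 2 * sumInvSq (N - m) := by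
  rw [← Finset.Ico_add_one_right_eq_Icc, Finset.sum_Ico_eq_sum_range,
    show N + 1 - (m + 1) = N - m by omega, sumInvSq, Finset.mul_sum]
  refine Finset.sum_congr rfl fun j _ => ?_
  have hk : ((m + 1 + j : ℕ) : ℝ) / c - y = ((j : ℝ) + 1) / c := by
    push_cast
    rw [hm]
    field_simp
    ring
  rw [hk]
  field_simp

lemma sum_range_one_div_sub_sq {c y : ℝ} (hc : c ≠ 0) {m : ℕ} (hm : (m : ℝ) = y * c) :
    ∑ k ∈ Finset.range m, 1 / (y - (k : ℝ) / c) ^ 2 = c ^ 2 * sumInvSq m := by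
  rw [← Finset.sum_range_reflect, sumInvSq, Finset.mul_sum]
  refine Finset.sum_congr rfl fun j hj => ?_
  have hjm : j < m := Finset.mem_range.mp hj
  have hk : y - ((m - 1 - j : ℕ) : ℝ) / c = ((j : ℝ) + 1) / c := by
    rw [Nat.cast_sub (by omega), Nat.cast_sub (by omega), hm]
    field_simp
    ring
  rw [hk]
  field_simp

lemma natCast_mul_two_pow_sub {s n : ℕ} (hn : s ≤ n) (q : ℕ) :
    ((q * 2 ^ (n - s) : ℕ) : ℝ) = q / 2 ^ s * 2 ^ n := by
  rw [← Nat.add_sub_cancel' hn, pow_add, Nat.add_sub_cancel_left]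
  push_cast
  field_simp

lemma natCast_two_pow_sub_mul_two_pow_sub {s n q : ℕ} (hn : s ≤ n) (hq : q ≤ 2 ^ s) :
    ((2 ^ n - q * 2 ^ (n - s) : ℕ) : ℝ) = (1 - q / 2 ^ s) * 2 ^ n := by
  have hle : q * 2 ^ (n - s) ≤ 2 ^ n :=
    (Nat.mul_le_mul_right _ hq).trans_eq (by rw [← pow_add, Nat.add_sub_cancel' hn])
  rw [Nat.cast_sub hle, natCast_mul_two_pow_sub hn]
  push_cast
  ring

theorem total_field_tendsto_uniform_field_general (s q : ℕ) (hq0 : 0 < q)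
    (hq : q < 2 ^ s) :
    Tendsto (fun n : ℕ =>
        (1 / ((2 : ℝ) ^ n + 1)) *
          ((∑ k ∈ Finset.Icc (q * 2 ^ (n - s) + 1) (2 ^ n),
              1 / ((k : ℝ) / 2 ^ n - (q : ℝ) / 2 ^ s) ^ 2) -
            ∑ k ∈ Finset.range (q * 2 ^ (n - s)),
              1 / ((q : ℝ) / 2 ^ s - (k : ℝ) / 2 ^ n) ^ 2))
      atTop (nhds (1 / ((q : ℝ) / 2 ^ s) - 1 / (1 - (q : ℝ) / 2 ^ s))) ∧
    1 / ((q : ℝ) / 2 ^ s) - 1 / (1 - (q : ℝ) / 2 ^ s) =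
      (2 * ((q : ℝ) / 2 ^ s) - 1) / (((q : ℝ) / 2 ^ s) * ((q : ℝ) / 2 ^ s - 1)) := by
  set x : ℝ := (q : ℝ) / 2 ^ s
  have hx0 : 0 < x := by positivity
  have hx1 : x < 1 := by
    rw [div_lt_one (by positivity)]
    exact_mod_cast hq
  have hratio : Tendsto (fun n : ℕ => (2 : ℝ) ^ n / (2 ^ n + 1)) atTop (𝓝 1) := by
    simpa [Function.comp_def] using (tendsto_natCast_div_add_atTop (1 : ℝ)).comp
      (tendsto_pow_atTop_atTop_of_one_lt (one_lt_two : 1 < 2))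
  have hscaled := tendsto_mul_sumInvSq_sub hx0 (sub_pos.2 hx1)
    (tendsto_pow_atTop_atTop_of_one_lt one_lt_two)
    ((eventually_ge_atTop s).mono fun n hn => natCast_mul_two_pow_sub hn q)
    ((eventually_ge_atTop s).mono fun n hn => natCast_two_pow_sub_mul_two_pow_sub hn hq.le)
  have hx_sub_one : x - 1 ≠ 0 := by linarith
  have hone_sub_x : 1 - x ≠ 0 := by linarith
  refine ⟨?_, by field_simp; ring⟩
  rw [← one_mul (1 / x - 1 / (1 - x))]
  refine (hratio.mul hscaled).congr' ((eventually_ge_atTop s).mono fun n hn => ?_)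
  have hm : ((q * 2 ^ (n - s) : ℕ) : ℝ) = x * 2 ^ n := natCast_mul_two_pow_sub hn q
  dsimp only
  rw [sum_Icc_one_div_sub_sq (by positivity) hm, sum_range_one_div_sub_sq (by positivity) hm]
  ring

/-- Let `s ≥ 1`, `0 < q < 2^s`, `x = q/2^s`. Under the uniform discrete arrangement of
`2^n + 1` charges at the points `k/2^n` (`k = 0, …, 2^n`), each of charge `1/(2^n+1)`,
the normalized total field at `x`,
`(1/(2^n+1))·(∑_{k=q·2^{n-s}+1}^{2^n} 1/(k/2^n - x)² − ∑_{k=0}^{q·2^{n-s}-1} 1/(x - k/2^n)²)`,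
converges to `1/x − 1/(1-x)`, which equals `(2x-1)/(x(x-1))`. -/
theorem total_field_tendsto_uniform_field (s q : ℕ) (hs : 1 ≤ s) (hq0 : 0 < q)
    (hq : q < 2 ^ s) :
    Tendsto (fun n : ℕ =>
        (1 / ((2 : ℝ) ^ n + 1)) *
          ((∑ k ∈ Finset.Icc (q * 2 ^ (n - s) + 1) (2 ^ n),
              1 / ((k : ℝ) / 2 ^ n - (q : ℝ) / 2 ^ s) ^ 2) -
            ∑ k ∈ Finset.range (q * 2 ^ (n - s)),
              1 / ((q : ℝ) / 2 ^ s - (k : ℝ) / 2 ^ n) ^ 2))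
      atTop (nhds (1 / ((q : ℝ) / 2 ^ s) - 1 / (1 - (q : ℝ) / 2 ^ s))) ∧
    1 / ((q : ℝ) / 2 ^ s) - 1 / (1 - (q : ℝ) / 2 ^ s) =
      (2 * ((q : ℝ) / 2 ^ s) - 1) / (((q : ℝ) / 2 ^ s) * ((q : ℝ) / 2 ^ s - 1)) :=
  total_field_tendsto_uniform_field_general s q hq0 hq
end
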